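/- arXiv:1411.5741 — 10 statements merged into one kernel-verified Lean document; each statement's English description precedes it below -/
import Mathlib

section
/- Let G and G' be finite additive abelian groups and φ : G → G' a group homomorphism with kernel of size g₁. If A ⊆ G is a B_h[g] set in G (i.e., every element of G has at most g distinct representations as a sum of h elements of A, counted as multisets), then the image φ(A) is a B_h[g·g₁] set in G'. -/
/-! Lift each representation of `b` in `φ '' A` to a representation in `A`; distinct
representations have distinct lifts. The sums of the lifts lie in the fibre of `φ` over `b`,
a coset of the kernel, so they take at most `g₁` values, and each value is represented by at
most `g` lifts. -/

/-- `A` is a `B_h[g]` set in the additive commutative monoid `G`: every element `b` of `G`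
has at most `g` distinct representations (as multisets) as a sum of `h` elements of `A`. -/
def IsBhg {G : Type*} [AddCommMonoid G] (A : Set G) (h g : ℕ) : Prop :=
  ∀ b : G, ∀ s : Finset (Multiset G),
    (∀ m ∈ s, Multiset.card m = h ∧ (∀ x ∈ m, x ∈ A) ∧ m.sum = b) → s.card ≤ g

theorem Multiset.exists_map_eq_of_forall_mem_image {α β : Type*} {f : α → β} {s : Set α}
    {t : Multiset β} (ht : ∀ y ∈ t, y ∈ f '' s) :
    ∃ m : Multiset α, (∀ x ∈ m, x ∈ s) ∧ m.map f = t := by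
  choose g hgs hfg using ht
  refine ⟨t.pmap g fun _ h ↦ h, ?_, ?_⟩
  · simp only [Multiset.mem_pmap]
    rintro _ ⟨y, hy, rfl⟩
    exact hgs y hy
  · rw [Multiset.map_pmap]
    simp [hfg, Multiset.pmap_eq_map]

theorem AddMonoidHom.card_le_natCard_ker {G G' : Type*} [AddGroup G] [AddGroup G']
    (φ : G →+ G') [Finite {x : G // φ x = 0}] {b : G'} {t : Finset G}
    (ht : ∀ x ∈ t, φ x = b) : t.card ≤ Nat.card {x : G // φ x = 0} := by
  obtain rfl | ⟨x₀, hx₀⟩ := t.eq_empty_or_nonempty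
  · simp
  rw [← Nat.card_eq_finsetCard]
  refine Nat.card_le_card_of_injective (fun x ↦ ⟨x - x₀, by simp [ht _ x.2, ht _ hx₀]⟩) ?_
  intro x y hxy
  simpa using hxy

theorem IsBhg.image_of_card_fiber_le {G G' : Type*} [AddCommMonoid G] [AddCommMonoid G']
    {A : Set G} {h g : ℕ} (hA : IsBhg A h g) (φ : G →+ G') {k : ℕ}
    (hφ : ∀ (b : G') (t : Finset G), (∀ x ∈ t, φ x = b) → t.card ≤ k) :
    IsBhg (φ '' A) h (g * k) := by
  classical
  intro b s hs
  choose! F hFA hFφ using fun m hm ↦ Multiset.exists_map_eq_of_forall_mem_image (hs m hm).2.1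
  have hF_inj : Set.InjOn F s := fun m hm m' hm' hmm' ↦ by rw [← hFφ m hm, ← hFφ m' hm', hmm']
  calc s.card ≤ g * (s.image fun m ↦ (F m).sum).card := by
        refine Finset.card_le_mul_card_image s g fun c _ ↦ ?_
        rw [← Finset.card_image_of_injOn (hF_inj.mono (Finset.filter_subset _ s))]
        refine hA c _ fun m hm ↦ ?_
        obtain ⟨m, hm', rfl⟩ := Finset.mem_image.1 hm
        obtain ⟨hms, hmc⟩ := Finset.mem_filter.1 hm'
        refine ⟨?_, hFA m hms, hmc⟩
        rw [← Multiset.card_map φ, hFφ m hms, (hs m hms).1]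
    _ ≤ g * k := by
        refine Nat.mul_le_mul_left g (hφ b _ fun c hc ↦ ?_)
        obtain ⟨m, hm, rfl⟩ := Finset.mem_image.1 hc
        rw [map_multiset_sum, hFφ m hm, (hs m hm).2.2]

theorem stmt_0_general {G G' : Type*} [AddCommGroup G] [Fintype G] [AddCommGroup G']
    (φ : G →+ G') (h g g₁ : ℕ)
    (hker : Nat.card {x : G // φ x = 0} = g₁)
    (A : Set G) (hA : IsBhg A h g) :
    IsBhg (φ '' A) h (g * g₁) :=
  hker ▸ hA.image_of_card_fiber_le φ fun _ _ ↦ φ.card_le_natCard_ker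

theorem stmt_0 {G G' : Type*} [AddCommGroup G] [Fintype G] [AddCommGroup G'] [Fintype G']
    (φ : G →+ G') (h g g₁ : ℕ) (hh : 2 ≤ h) (hg : 1 ≤ g)
    (hker : Nat.card {x : G // φ x = 0} = g₁)
    (A : Set G) (hA : IsBhg A h g) :
    IsBhg (φ '' A) h (g * g₁) :=
  stmt_0_general φ h g g₁ hker A hA
end

section
/- Let F be a field, p(x) ∈ F[x] a polynomial of degree h ≥ 2, and S ⊆ F a finite set such that p(s) ≠ 0 for all s ∈ S. Then the set {x − s : s ∈ S} of residue classes is a B_h set (with multiplication as the group operation) in the group of units of the quotient ring F[x]/⟨p(x)⟩, and it has exactly |S| elements. -/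
open Polynomial

/-- `A` is a `B_h[g]` set in the commutative monoid `G` (written multiplicatively):
every element `b` has at most `g` distinct representations (as multisets) as a product
of `h` elements of `A`. -/
def IsMulBhg {G : Type*} [CommMonoid G] (A : Set G) (h g : ℕ) : Prop :=
  ∀ b : G, ∀ s : Finset (Multiset G),
    (∀ m ∈ s, Multiset.card m = h ∧ (∀ x ∈ m, x ∈ A) ∧ m.prod = b) → s.card ≤ g

/-!
Monic polynomials of degree `h = deg p` that agree modulo `p` are equal, because their difference
has degree `< h` and is divisible by `p`. A product of `h` classes `x - s` is the class of the monic
polynomial `∏ (x - s)` of degree `h`, so it determines that polynomial, and hence the multiset of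
the `s` as its roots. The same degree argument, applied to `(x - s) - (x - t) = t - s`, shows that
distinct `s` give distinct classes `x - s`.
-/

theorem isMulBhg_one_of_injOn_prod {G : Type*} [CommMonoid G] {A : Set G} {h : ℕ}
    (hA : Set.InjOn Multiset.prod {m : Multiset G | Multiset.card m = h ∧ ∀ x ∈ m, x ∈ A}) :
    IsMulBhg A h 1 := by
  intro b s hs
  refine Finset.card_le_one.mpr fun m₁ h₁ m₂ h₂ => ?_
  obtain ⟨hc₁, hA₁, hb₁⟩ := hs m₁ h₁
  obtain ⟨hc₂, hA₂, hb₂⟩ := hs m₂ h₂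
  exact hA ⟨hc₁, hA₁⟩ ⟨hc₂, hA₂⟩ (hb₁.trans hb₂.symm)

theorem Multiset.exists_map_eq_of_forall_mem_range {α β : Type*} {f : α → β} {m : Multiset β}
    (h : ∀ x ∈ m, x ∈ Set.range f) : ∃ T : Multiset α, T.map f = m := by
  induction m using Multiset.induction_on with
  | empty => exact ⟨0, rfl⟩
  | cons b m ih =>
    obtain ⟨a, rfl⟩ := h _ (Multiset.mem_cons_self _ _)
    obtain ⟨T, hT⟩ := ih fun x hx => h x (Multiset.mem_cons_of_mem hx)
    exact ⟨a ::ₘ T, by rw [Multiset.map_cons, hT]⟩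

theorem Ideal.Quotient.isUnit_mk_of_isCoprime {R : Type*} [CommRing R] {a p : R}
    (h : IsCoprime a p) : IsUnit (Ideal.Quotient.mk (Ideal.span {p}) a) := by
  obtain ⟨u, v, huv⟩ := h
  refine .of_mul_eq_one (Ideal.Quotient.mk _ u) ?_
  rw [← map_mul, ← map_one (Ideal.Quotient.mk _), Ideal.Quotient.eq, Ideal.mem_span_singleton]
  exact ⟨-v, by linear_combination huv⟩

namespace Polynomial

variable {R : Type*} [CommRing R] [IsDomain R]

theorem isUnit_mk_X_sub_C {K : Type*} [Field K] {p : K[X]} {s : K} (hs : ¬p.IsRoot s) :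
    IsUnit (Ideal.Quotient.mk (Ideal.span {p}) (X - C s)) :=
  Ideal.Quotient.isUnit_mk_of_isCoprime <|
    (irreducible_X_sub_C s).coprime_iff_not_dvd.mpr (by rwa [dvd_iff_isRoot])

theorem eq_of_mk_eq_of_natDegree_sub_lt {p q r : R[X]}
    (h : Ideal.Quotient.mk (Ideal.span {p}) q = Ideal.Quotient.mk (Ideal.span {p}) r)
    (hdeg : (q - r).natDegree < p.natDegree) : q = r :=
  sub_eq_zero.mp <|
    eq_zero_of_dvd_of_natDegree_lt (Ideal.mem_span_singleton.mp (Ideal.Quotient.eq.mp h)) hdeg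

theorem mk_X_sub_C_injective {p : R[X]} (hp : p.natDegree ≠ 0) :
    Function.Injective fun s : R => Ideal.Quotient.mk (Ideal.span {p}) (X - C s) := by
  intro s t hst
  refine C_injective (sub_right_injective (eq_of_mk_eq_of_natDegree_sub_lt hst ?_))
  rw [sub_sub_sub_cancel_left, ← C_sub, natDegree_C]
  exact Nat.pos_of_ne_zero hp

theorem isMonicOfDegree_multiset_prod_X_sub_C (T : Multiset R) :
    IsMonicOfDegree (T.map fun a => X - C a).prod (Multiset.card T) :=
  ⟨natDegree_multiset_prod_X_sub_C_eq_card T,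
    monic_multiset_prod_of_monic _ _ fun a _ => monic_X_sub_C a⟩

theorem eq_of_prod_mk_X_sub_C_eq {p : R[X]} (hp : p.natDegree ≠ 0) {T₁ T₂ : Multiset R}
    (h₁ : Multiset.card T₁ = p.natDegree) (h₂ : Multiset.card T₂ = p.natDegree)
    (h : (T₁.map fun s => Ideal.Quotient.mk (Ideal.span {p}) (X - C s)).prod =
      (T₂.map fun s => Ideal.Quotient.mk (Ideal.span {p}) (X - C s)).prod) : T₁ = T₂ := by
  have hprod : ∀ T : Multiset R, (T.map fun s => Ideal.Quotient.mk (Ideal.span {p}) (X - C s)).prod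
      = Ideal.Quotient.mk (Ideal.span {p}) (T.map fun a => X - C a).prod := fun T => by
    rw [map_multiset_prod, Multiset.map_map]; rfl
  rw [hprod, hprod] at h
  have hmon₁ := isMonicOfDegree_multiset_prod_X_sub_C T₁
  have hmon₂ := isMonicOfDegree_multiset_prod_X_sub_C T₂
  rw [h₁] at hmon₁
  rw [h₂] at hmon₂
  have hpoly := eq_of_mk_eq_of_natDegree_sub_lt h (hmon₁.natDegree_sub_lt hp hmon₂)
  rw [← roots_multiset_prod_X_sub_C T₁, ← roots_multiset_prod_X_sub_C T₂, hpoly]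

theorem isMulBhg_units_mk_X_sub_C {p : R[X]} (hp : p.natDegree ≠ 0) (S : Set R) :
    IsMulBhg {u : (R[X] ⧸ Ideal.span {p})ˣ |
        ∃ s ∈ S, (u : R[X] ⧸ Ideal.span {p}) = Ideal.Quotient.mk (Ideal.span {p}) (X - C s)}
      p.natDegree 1 := by
  have lift : ∀ m : Multiset (R[X] ⧸ Ideal.span {p})ˣ, (∀ u ∈ m, ∃ s ∈ S,
      (u : R[X] ⧸ Ideal.span {p}) = Ideal.Quotient.mk (Ideal.span {p}) (X - C s)) →
      ∃ T : Multiset R,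
        T.map (fun s => Ideal.Quotient.mk (Ideal.span {p}) (X - C s)) = m.map Units.val :=
    fun m hm => Multiset.exists_map_eq_of_forall_mem_range fun x hx => by
      obtain ⟨u, hu, rfl⟩ := Multiset.mem_map.mp hx
      obtain ⟨s, -, hs⟩ := hm u hu
      exact ⟨s, hs.symm⟩
  refine isMulBhg_one_of_injOn_prod fun m₁ ⟨hc₁, hA₁⟩ m₂ ⟨hc₂, hA₂⟩ hprod => ?_
  obtain ⟨T₁, hT₁⟩ := lift m₁ hA₁
  obtain ⟨T₂, hT₂⟩ := lift m₂ hA₂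
  have hT : T₁ = T₂ := by
    refine eq_of_prod_mk_X_sub_C_eq hp ?_ ?_ ?_
    · simpa [hc₁] using congrArg Multiset.card hT₁
    · simpa [hc₂] using congrArg Multiset.card hT₂
    · have hval := congrArg (Units.coeHom _) hprod
      rw [hT₁, hT₂]
      rwa [map_multiset_prod, map_multiset_prod] at hval
  refine Multiset.map_injective Units.val_injective ?_
  rw [← hT₁, ← hT₂, hT]

theorem ncard_units_mk_X_sub_C {p : R[X]} (hp : p.natDegree ≠ 0) {S : Set R}
    (hS : ∀ s ∈ S, IsUnit (Ideal.Quotient.mk (Ideal.span {p}) (X - C s))) :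
    Set.ncard {u : (R[X] ⧸ Ideal.span {p})ˣ |
        ∃ s ∈ S, (u : R[X] ⧸ Ideal.span {p}) = Ideal.Quotient.mk (Ideal.span {p}) (X - C s)}
      = S.ncard := by
  rw [← Set.ncard_image_of_injective _ Units.val_injective,
    ← Set.ncard_image_of_injective S (mk_X_sub_C_injective hp)]
  congr 1
  ext x
  constructor
  · rintro ⟨u, ⟨s, hs, hu⟩, rfl⟩
    exact ⟨s, hs, hu.symm⟩
  · rintro ⟨s, hs, rfl⟩
    exact ⟨(hS s hs).unit, ⟨s, hs, rfl⟩, rfl⟩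

end Polynomial

theorem stmt_3 {F : Type*} [Field F] (p : F[X]) (h : ℕ) (hh : 2 ≤ h)
    (hdeg : p.natDegree = h) (S : Finset F) (hS : ∀ s ∈ S, p.eval s ≠ 0) :
    (∀ s ∈ S, IsUnit (Ideal.Quotient.mk (Ideal.span {p}) (X - C s))) ∧
    IsMulBhg {u : (F[X] ⧸ Ideal.span {p})ˣ |
        ∃ s ∈ S, (u : F[X] ⧸ Ideal.span {p}) = Ideal.Quotient.mk (Ideal.span {p}) (X - C s)}
      h 1 ∧
    Set.ncard {u : (F[X] ⧸ Ideal.span {p})ˣ |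
        ∃ s ∈ S, (u : F[X] ⧸ Ideal.span {p}) = Ideal.Quotient.mk (Ideal.span {p}) (X - C s)}
      = S.card := by
  have hp : p.natDegree ≠ 0 := by omega
  have hunit : ∀ s ∈ S, IsUnit (Ideal.Quotient.mk (Ideal.span {p}) (X - C s)) :=
    fun s hs => isUnit_mk_X_sub_C (hS s hs)
  refine ⟨hunit, hdeg ▸ isMulBhg_units_mk_X_sub_C hp S, ?_⟩
  rw [← Set.ncard_coe_finset S]
  exact ncard_units_mk_X_sub_C hp hunit
end

section
/- Let F be a field and θ an algebraic element of degree h over F. Then the set θ + F = {θ + a : a ∈ F} is a B_h set in the multiplicative group of nonzero elements of F(θ). -/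
open IntermediateField Polynomial

/-! If `θ` has degree `h` over `F`, a product `∏ (θ + aᵢ)` of `h` factors is the value at `θ`
of the monic polynomial `∏ (X + aᵢ)` of degree `h`. Two such polynomials with the same value
at `θ` differ by a polynomial of degree `< h` vanishing at `θ`, so they coincide, and unique
factorisation in `F[X]` recovers the multiset `{aᵢ}`. The translates `θ + a` are nonzero
because `θ ∉ F`. -/

theorem IsMulBhg.one_of_prod_injOn {G : Type*} [CommMonoid G] {A : Set G} {h : ℕ}
    (H : ∀ m₁ m₂ : Multiset G, Multiset.card m₁ = h → Multiset.card m₂ = h →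
      (∀ x ∈ m₁, x ∈ A) → (∀ x ∈ m₂, x ∈ A) → m₁.prod = m₂.prod → m₁ = m₂) :
    IsMulBhg A h 1 := by
  intro b s hs
  refine Finset.card_le_one.mpr fun m₁ hm₁ m₂ hm₂ => ?_
  obtain ⟨hcard₁, hA₁, hprod₁⟩ := hs m₁ hm₁
  obtain ⟨hcard₂, hA₂, hprod₂⟩ := hs m₂ hm₂
  exact H m₁ m₂ hcard₁ hcard₂ hA₁ hA₂ (hprod₁.trans hprod₂.symm)

theorem Multiset.exists_eq_map_of_forall_exists_eq {α β : Type*} (f : α → β)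
    (m : Multiset β) (hm : ∀ x ∈ m, ∃ a, x = f a) : ∃ t : Multiset α, m = t.map f := by
  induction m using Multiset.induction with
  | empty => exact ⟨0, rfl⟩
  | cons x m ih =>
    obtain ⟨t, rfl⟩ := ih fun y hy => hm y (Multiset.mem_cons_of_mem hy)
    obtain ⟨a, rfl⟩ := hm x (Multiset.mem_cons_self x _)
    exact ⟨a ::ₘ t, by simp⟩

section Minpoly

variable {F B : Type*} [Field F]

theorem add_algebraMap_ne_zero [Ring B] [Nontrivial B] [Algebra F B] {x : B}
    (hx : (minpoly F x).natDegree ≠ 1) (a : F) : x + algebraMap F B a ≠ 0 := by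
  intro hzero
  refine hx (minpoly.natDegree_eq_one_iff.mpr ⟨-a, ?_⟩)
  rw [map_neg]
  exact (eq_neg_of_add_eq_zero_left hzero).symm

variable [CommRing B] [Algebra F B]

theorem aeval_multiset_prod_X_sub_C (x : B) (s : Multiset F) :
    aeval x (s.map fun a => X - C a).prod = (s.map fun a => x - algebraMap F B a).prod := by
  simp [map_multiset_prod, Multiset.map_map]

theorem Multiset.eq_of_prod_map_sub_eq {x : B} {s t : Multiset F}
    (hcard : Multiset.card s = Multiset.card t)
    (hdeg : Multiset.card t ≤ (minpoly F x).natDegree)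
    (hprod : (s.map fun a => x - algebraMap F B a).prod =
      (t.map fun a => x - algebraMap F B a).prod) :
    s = t := by
  set p := (s.map fun a => X - C a).prod
  set q := (t.map fun a => X - C a).prod
  have hp : p.Monic := monic_multisetProd_X_sub_C s
  have hq : q.Monic := monic_multisetProd_X_sub_C t
  have hpq : p = q := by
    by_contra hne
    have hroot : aeval x (p - q) = 0 := by
      rw [map_sub, aeval_multiset_prod_X_sub_C, aeval_multiset_prod_X_sub_C, hprod, sub_self]
    have hdeg_pq : p.natDegree = q.natDegree := by
      rw [natDegree_multiset_prod_X_sub_C_eq_card, natDegree_multiset_prod_X_sub_C_eq_card, hcard]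
    have hlt : (p - q).degree < p.degree :=
      degree_sub_lt_left (by rw [degree_eq_natDegree hp.ne_zero, degree_eq_natDegree hq.ne_zero,
        hdeg_pq]) hp.ne_zero (hp.leadingCoeff.trans hq.leadingCoeff.symm)
    rw [degree_eq_natDegree hp.ne_zero, ← natDegree_lt_iff_degree_lt (sub_ne_zero.mpr hne),
      natDegree_multiset_prod_X_sub_C_eq_card, hcard] at hlt
    have hle :=
      natDegree_le_natDegree (minpoly.degree_le_of_ne_zero F x (sub_ne_zero.mpr hne) hroot)
    omega
  calc s = p.roots := (roots_multiset_prod_X_sub_C s).symm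
    _ = q.roots := by rw [hpq]
    _ = t := roots_multiset_prod_X_sub_C t

theorem Multiset.eq_of_prod_map_add_eq {x : B} {s t : Multiset F}
    (hcard : Multiset.card s = Multiset.card t)
    (hdeg : Multiset.card t ≤ (minpoly F x).natDegree)
    (hprod : (s.map fun a => x + algebraMap F B a).prod =
      (t.map fun a => x + algebraMap F B a).prod) :
    s = t := by
  refine Multiset.map_injective neg_injective
    (Multiset.eq_of_prod_map_sub_eq (x := x) (by simpa using hcard) (by simpa using hdeg) ?_)
  simpa [Multiset.map_map, Function.comp_def] using hprod

end Minpoly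

theorem stmt_4_general {F E : Type*} [Field F] [Field E] [Algebra F E] (θ : E)
    (h : ℕ) (hh : 2 ≤ h) (hdeg : (minpoly F θ).natDegree = h) :
    (∀ x ∈ {x : F⟮θ⟯ | ∃ a : F, x = AdjoinSimple.gen F θ + algebraMap F F⟮θ⟯ a},
      x ≠ 0) ∧
    IsMulBhg {x : F⟮θ⟯ | ∃ a : F, x = AdjoinSimple.gen F θ + algebraMap F F⟮θ⟯ a} h 1 := by
  have hdeg' : (minpoly F (AdjoinSimple.gen F θ)).natDegree = h := by rw [minpoly_gen, hdeg]
  refine ⟨fun x ⟨a, hx⟩ => hx ▸ add_algebraMap_ne_zero (by omega) a,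
    IsMulBhg.one_of_prod_injOn fun m₁ m₂ hcard₁ hcard₂ hA₁ hA₂ hprod => ?_⟩
  obtain ⟨t₁, rfl⟩ := Multiset.exists_eq_map_of_forall_exists_eq _ m₁ hA₁
  obtain ⟨t₂, rfl⟩ := Multiset.exists_eq_map_of_forall_exists_eq _ m₂ hA₂
  rw [Multiset.card_map] at hcard₁ hcard₂
  rw [Multiset.eq_of_prod_map_add_eq (hcard₁.trans hcard₂.symm) (by omega) hprod]

theorem stmt_4 {F E : Type*} [Field F] [Field E] [Algebra F E] (θ : E)
    (h : ℕ) (hh : 2 ≤ h) (hθ : IsIntegral F θ) (hdeg : (minpoly F θ).natDegree = h) :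
    (∀ x ∈ {x : F⟮θ⟯ | ∃ a : F, x = AdjoinSimple.gen F θ + algebraMap F F⟮θ⟯ a},
      x ≠ 0) ∧
    IsMulBhg {x : F⟮θ⟯ | ∃ a : F, x = AdjoinSimple.gen F θ + algebraMap F F⟮θ⟯ a} h 1 :=
  stmt_4_general θ h hh hdeg
end

section
/- Let q be a prime power, h ≥ 2 an integer, and θ an algebraic element of degree d over F_q where d divides h, viewed inside F_{q^h}. Then the set {θ + a : a ∈ F_q} is a B_d set in the multiplicative group F_{q^h}^*, and it has q elements. -/
open Polynomial Multiset

section Aux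
variable {Fq E : Type*} [Field Fq] [Field E] [Fintype E] [Algebra Fq E]

lemma aux_monic (t : Multiset Fq) : ((t.map (fun a => X + C a)).prod).Monic := by
  exact monic_multiset_prod_of_monic t _ (fun a _ => monic_X_add_C a)

lemma aux_deg (t : Multiset Fq) : ((t.map (fun a => X + C a)).prod).natDegree = Multiset.card t := by
  rw [natDegree_multiset_prod_of_monic]
  · simp [Multiset.map_map, Function.comp]
  · intro p hp
    obtain ⟨a, -, rfl⟩ := Multiset.mem_map.mp hp
    simpa using monic_X_add_C a

lemma aux_aeval (θ : E) (t : Multiset Fq) :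
    aeval θ ((t.map (fun a => X + C a)).prod) = (t.map (fun a => θ + algebraMap Fq E a)).prod := by
  rw [map_multiset_prod, Multiset.map_map]
  congr 1
  apply Multiset.map_congr rfl
  intro a _; simp

lemma aux_roots (t : Multiset Fq) :
    ((t.map (fun a => X + C a)).prod).roots = t.map (fun a => -a) := by
  rw [roots_multiset_prod]
  · rw [Multiset.bind_map]
    have : ∀ a : Fq, (X + C a).roots = {-a} := by
      intro a
      rw [show X + C a = X - C (-a) by rw [map_neg, sub_neg_eq_add], roots_X_sub_C]
    simp only [this]
    exact Multiset.bind_singleton t _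
  · intro h
    obtain ⟨a, -, ha⟩ := Multiset.mem_map.mp h
    exact (monic_X_add_C a).ne_zero ha

lemma aux_key (d : ℕ) (hd : 2 ≤ d) (θ : E) (hdeg : (minpoly Fq θ).natDegree = d)
    (t₁ t₂ : Multiset Fq) (h1 : Multiset.card t₁ = d) (h2 : Multiset.card t₂ = d)
    (hp : (t₁.map (fun a => θ + algebraMap Fq E a)).prod
        = (t₂.map (fun a => θ + algebraMap Fq E a)).prod) : t₁ = t₂ := by
  have hPeq : (t₁.map (fun a => X + C a)).prod = (t₂.map (fun a => X + C a)).prod := by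
    by_contra hne
    have hsub : (t₁.map (fun a => X + C a)).prod - (t₂.map (fun a => X + C a)).prod ≠ 0 :=
      sub_ne_zero.mpr hne
    have hde : ((t₁.map (fun a => X + C a)).prod).degree
        = ((t₂.map (fun a => X + C a)).prod).degree := by
      rw [degree_eq_natDegree (aux_monic t₁).ne_zero,
        degree_eq_natDegree (aux_monic t₂).ne_zero, aux_deg, aux_deg, h1, h2]
    have hlc : ((t₁.map (fun a => X + C a)).prod).leadingCoeff
        = ((t₂.map (fun a => X + C a)).prod).leadingCoeff := by
      rw [(aux_monic t₁).leadingCoeff, (aux_monic t₂).leadingCoeff]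
    have hdegsub := degree_sub_lt hde (aux_monic t₁).ne_zero hlc
    have hroot : aeval θ ((t₁.map (fun a => X + C a)).prod - (t₂.map (fun a => X + C a)).prod)
        = 0 := by rw [map_sub, aux_aeval, aux_aeval, hp, sub_self]
    have hdvd := minpoly.dvd Fq θ hroot
    have h2' := natDegree_le_of_dvd hdvd hsub
    rw [hdeg] at h2'
    have h3 := natDegree_lt_natDegree hsub hdegsub
    rw [aux_deg, h1] at h3
    omega
  have hroots : t₁.map (fun a => -a) = t₂.map (fun a => -a) := by
    rw [← aux_roots, ← aux_roots, hPeq]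
  exact Multiset.map_injective neg_injective hroots

lemma aux_extract (θ : E) (m : Multiset E)
    (hm : ∀ x ∈ m, ∃ a : Fq, x = θ + algebraMap Fq E a) :
    ∃ t : Multiset Fq, m = t.map (fun a => θ + algebraMap Fq E a) := by
  induction m using Multiset.induction with
  | empty => exact ⟨0, rfl⟩
  | cons x m ih =>
    obtain ⟨t, ht⟩ := ih (fun y hy => hm y (Multiset.mem_cons_of_mem hy))
    obtain ⟨a, ha⟩ := hm x (Multiset.mem_cons_self x m)
    exact ⟨a ::ₘ t, by rw [Multiset.map_cons, ← ha, ← ht]⟩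

end Aux

theorem stmt_5 {Fq E : Type*} [Field Fq] [Fintype Fq] [Field E] [Fintype E] [Algebra Fq E]
    (q h d : ℕ) (hq : Fintype.card Fq = q) (hh : 2 ≤ h) (hd : 2 ≤ d) (hdh : d ∣ h)
    (hcard : Fintype.card E = q ^ h)
    (θ : E) (hdeg : (minpoly Fq θ).natDegree = d) :
    (∀ x ∈ {x : E | ∃ a : Fq, x = θ + algebraMap Fq E a}, x ≠ 0) ∧
    IsMulBhg {x : E | ∃ a : Fq, x = θ + algebraMap Fq E a} d 1 ∧
    Set.ncard {x : E | ∃ a : Fq, x = θ + algebraMap Fq E a} = q := by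
  have hinj : Function.Injective (fun a : Fq => θ + algebraMap Fq E a) := by
    intro a b hab
    exact (algebraMap Fq E).injective (by simpa using hab)
  refine ⟨?_, ?_, ?_⟩
  · rintro x ⟨a, rfl⟩ hx0
    have hθ : θ = algebraMap Fq E (-a) := by
      rw [map_neg]; linear_combination hx0
    rw [hθ, minpoly.eq_X_sub_C] at hdeg
    simp [natDegree_X_sub_C] at hdeg
    omega
  · intro b s hs
    rw [Finset.card_le_one]
    intro m₁ hm₁ m₂ hm₂
    obtain ⟨hc₁, hA₁, hp₁⟩ := hs m₁ hm₁
    obtain ⟨hc₂, hA₂, hp₂⟩ := hs m₂ hm₂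
    obtain ⟨t₁, rfl⟩ := aux_extract θ m₁ hA₁
    obtain ⟨t₂, rfl⟩ := aux_extract θ m₂ hA₂
    simp only [Multiset.card_map] at hc₁ hc₂
    have := aux_key d hd θ hdeg t₁ t₂ hc₁ hc₂ (by rw [hp₁, hp₂])
    rw [this]
  · have : {x : E | ∃ a : Fq, x = θ + algebraMap Fq E a}
        = Set.range (fun a : Fq => θ + algebraMap Fq E a) := by
      ext x; simp [eq_comm, Set.range]
    rw [this, ← Set.image_univ, Set.ncard_image_of_injective _ hinj, Set.ncard_univ,
      Nat.card_eq_fintype_card, hq]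
end

section
/- Let q be a prime power, h ≥ 2 an integer, and θ a primitive element of F_{q^h}. Then the set {a ∈ [1, q^h − 1] : θ^a − θ ∈ F_q} equals {log_θ(θ + x) : x ∈ F_q} as subsets of Z/(q^h − 1)Z (the Bose–Chowla set), and in particular is a B_h set in Z/(q^h − 1)Z with q elements. -/
theorem isBhg_range_one_of_sum_map_inj {α G : Type*} [AddCommMonoid G] {f : α → G} {h : ℕ}
    (hf : ∀ t t' : Multiset α, Multiset.card t = h → Multiset.card t' = h →
      (t.map f).sum = (t'.map f).sum → t = t') :
    IsBhg (Set.range f) h 1 := by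
  intro b s hs
  refine Finset.card_le_one.2 fun m hm m' hm' => ?_
  obtain ⟨hcard, hmem, hsum⟩ := hs m hm
  obtain ⟨hcard', hmem', hsum'⟩ := hs m' hm'
  have : CanLift G α f (· ∈ Set.range f) := ⟨fun _ => id⟩
  lift m to Multiset α using hmem with t
  lift m' to Multiset α using hmem' with t'
  rw [Multiset.card_map] at hcard hcard'
  rw [hf t t' hcard hcard' (hsum.trans hsum'.symm)]

theorem ZMod.exists_mem_Icc_natCast_eq {n : ℕ} [NeZero n] (x : ZMod n) :
    ∃ a ∈ Finset.Icc 1 n, (a : ZMod n) = x :=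
  ⟨(x - 1).val + 1, Finset.mem_Icc.2 ⟨by omega, (x - 1).val_lt⟩,
    by push_cast [ZMod.natCast_zmod_val]; ring⟩

open Polynomial in
theorem Multiset.eq_of_prod_map_sub_algebraMap_eq {K E : Type*} [Field K] [CommRing E]
    [Algebra K E] {x : E} {t t' : Multiset K} (hcard : card t = card t')
    (hdeg : card t ≤ (minpoly K x).natDegree)
    (hprod : (t.map (x - algebraMap K E ·)).prod = (t'.map (x - algebraMap K E ·)).prod) :
    t = t' := by
  rcases eq_or_ne (card t) 0 with h0 | h0
  · rw [card_eq_zero.1 h0, card_eq_zero.1 (hcard ▸ h0 :)]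
  have hmonic (s : Multiset K) : IsMonicOfDegree (s.map (X - C ·)).prod (card s) :=
    ⟨natDegree_multiset_prod_X_sub_C_eq_card s,
      monic_multiset_prod_of_monic _ _ fun a _ => monic_X_sub_C a⟩
  have haeval (s : Multiset K) :
      aeval x (s.map (X - C ·)).prod = (s.map (x - algebraMap K E ·)).prod := by
    simp [map_multiset_prod, Multiset.map_map]
  suffices (t.map (X - C ·)).prod = (t'.map (X - C ·)).prod by
    simpa using congrArg roots this
  by_contra hne
  have hlt := (hmonic t).natDegree_sub_lt h0 (hcard ▸ hmonic t')
  have hle := natDegree_le_of_dvd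
    (minpoly.dvd K x (by rw [map_sub, haeval, haeval, hprod, sub_self])) (sub_ne_zero.2 hne)
  omega

section

open IntermediateField

variable {F E : Type*} [Field F] [Field E] [Algebra F E]

theorem IntermediateField.adjoin_simple_eq_top_of_forall_mem_zpowers {θ : Eˣ}
    (hθ : ∀ x : Eˣ, x ∈ Subgroup.zpowers θ) : F⟮(θ : E)⟯ = ⊤ := by
  refine eq_top_iff.2 fun x _ => ?_
  rcases eq_or_ne x 0 with rfl | hx
  · exact zero_mem _
  obtain ⟨k, hk⟩ := hθ (Units.mk0 x hx)
  rw [← Units.val_mk0 hx, ← hk, Units.val_zpow_eq_zpow_val]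
  exact zpow_mem (mem_adjoin_simple_self F _) k

theorem minpoly.natDegree_eq_finrank_of_forall_mem_zpowers [FiniteDimensional F E] {θ : Eˣ}
    (hθ : ∀ x : Eˣ, x ∈ Subgroup.zpowers θ) :
    (minpoly F (θ : E)).natDegree = Module.finrank F E := by
  rw [← adjoin.finrank (.of_finite F _), adjoin_simple_eq_top_of_forall_mem_zpowers hθ,
    finrank_top']

end

def boseChowlaSet (F : Type*) {E M : Type*} [CommSemiring F] [Semiring E] [Algebra F E] [Add M]
    (e : Eˣ ≃* Multiplicative M) (θ : E) : Set M :=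
  {x | ∃ c : F, ∃ u : Eˣ, (u : E) = θ + algebraMap F E c ∧ x = Multiplicative.toAdd (e u)}

theorem setOf_pow_sub_mem_range_eq_boseChowlaSet {R E : Type*} [CommSemiring R] [CommRing E]
    [Algebra R E] {n : ℕ} [NeZero n] {θ : Eˣ} (e : Eˣ ≃* Multiplicative (ZMod n))
    (he : e θ = Multiplicative.ofAdd 1) :
    {x : ZMod n | ∃ a : ℕ, 1 ≤ a ∧ a ≤ n ∧
        ((θ : E) ^ a - (θ : E)) ∈ Set.range (algebraMap R E) ∧ x = (a : ZMod n)} =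
      boseChowlaSet R e (θ : E) := by
  have hpow (a : ℕ) : e (θ ^ a) = Multiplicative.ofAdd (a : ZMod n) := by
    rw [map_pow, he, ← ofAdd_nsmul, nsmul_one]
  ext x
  constructor
  · rintro ⟨a, -, -, ⟨c, hc⟩, rfl⟩
    exact ⟨c, θ ^ a, by rw [Units.val_pow_eq_pow_val, hc]; ring, by rw [hpow]; rfl⟩
  · rintro ⟨c, u, hu, rfl⟩
    obtain ⟨a, ha, hax⟩ := ZMod.exists_mem_Icc_natCast_eq (e u).toAdd
    have hθa : θ ^ a = u := e.injective (by rw [hpow, hax, ofAdd_toAdd])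
    refine ⟨a, (Finset.mem_Icc.1 ha).1, (Finset.mem_Icc.1 ha).2, ⟨c, ?_⟩, hax.symm⟩
    rw [← Units.val_pow_eq_pow_val, hθa, hu]
    ring

section

variable {F E M : Type*} [Field F] [Field E] [Algebra F E] {θ : E}

theorem add_algebraMap_ne_zero_s7 (hθ : θ ∉ Set.range (algebraMap F E)) (c : F) :
    θ + algebraMap F E c ≠ 0 :=
  fun h0 => hθ ⟨-c, by rw [map_neg]; linear_combination -h0⟩

variable [AddCommMonoid M] (e : Eˣ ≃* Multiplicative M)

theorem boseChowlaSet_eq_range (hθ : θ ∉ Set.range (algebraMap F E)) :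
    boseChowlaSet F e θ =
      Set.range fun c => (e (Units.mk0 _ (add_algebraMap_ne_zero_s7 hθ c))).toAdd := by
  ext x
  constructor
  · rintro ⟨c, u, hu, rfl⟩
    exact ⟨c, congrArg (fun u => (e u).toAdd) (Units.ext hu.symm)⟩
  · rintro ⟨c, rfl⟩
    exact ⟨c, _, rfl, rfl⟩

theorem isBhg_boseChowlaSet {h : ℕ} (hθ : θ ∉ Set.range (algebraMap F E))
    (hdeg : h ≤ (minpoly F θ).natDegree) : IsBhg (boseChowlaSet F e θ) h 1 := by
  rw [boseChowlaSet_eq_range e hθ]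
  refine isBhg_range_one_of_sum_map_inj fun t t' ht ht' hsum => ?_
  set g : F → Eˣ := fun c => Units.mk0 _ (add_algebraMap_ne_zero_s7 hθ c)
  have hlog (s : Multiset F) :
      (s.map fun c => (e (g c)).toAdd).sum = (e (s.map g).prod).toAdd := by
    simp [map_multiset_prod, Multiset.map_map]
  have hprod (s : Multiset F) : (((s.map g).prod : Eˣ) : E) =
      ((s.map Neg.neg).map (θ - algebraMap F E ·)).prod := by
    rw [← Units.coeHom_apply, map_multiset_prod]
    simp [Multiset.map_map, Function.comp_def, g]
  refine Multiset.map_injective neg_injective (Multiset.eq_of_prod_map_sub_algebraMap_eq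
    (by simpa using ht.trans ht'.symm) (by simpa [ht] using hdeg) ?_)
  rw [← hprod, ← hprod,
    e.injective (Multiplicative.toAdd.injective ((hlog t).symm.trans (hsum.trans (hlog t'))))]

theorem ncard_boseChowlaSet [Finite F] (hθ : θ ∉ Set.range (algebraMap F E)) :
    (boseChowlaSet F e θ).ncard = Nat.card F := by
  rw [boseChowlaSet_eq_range e hθ, Set.ncard_range_of_injective]
  intro a b hab
  have := congrArg Units.val (e.injective (Multiplicative.toAdd.injective hab))
  exact (algebraMap F E).injective (add_left_cancel this)

end

theorem stmt_7 {Fq E : Type*} [Field Fq] [Fintype Fq] [Field E] [Fintype E] [Algebra Fq E]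
    (q h : ℕ) (hq : Fintype.card Fq = q) (hh : 2 ≤ h) (hcard : Fintype.card E = q ^ h)
    (θ : Eˣ) (hθ : ∀ x : Eˣ, x ∈ Subgroup.zpowers θ)
    -- `e` is the discrete logarithm to base `θ`
    (e : Eˣ ≃* Multiplicative (ZMod (q ^ h - 1)))
    (he : e θ = Multiplicative.ofAdd 1) :
    {x : ZMod (q ^ h - 1) | ∃ a : ℕ, 1 ≤ a ∧ a ≤ q ^ h - 1 ∧
        ((θ : E) ^ a - (θ : E)) ∈ Set.range (algebraMap Fq E) ∧ x = (a : ZMod (q ^ h - 1))}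
      = {x : ZMod (q ^ h - 1) | ∃ a : Fq, ∃ u : Eˣ,
          (u : E) = (θ : E) + algebraMap Fq E a ∧ x = Multiplicative.toAdd (e u)} ∧
    IsBhg {x : ZMod (q ^ h - 1) | ∃ a : Fq, ∃ u : Eˣ,
        (u : E) = (θ : E) + algebraMap Fq E a ∧ x = Multiplicative.toAdd (e u)} h 1 ∧
    Set.ncard {x : ZMod (q ^ h - 1) | ∃ a : Fq, ∃ u : Eˣ,
        (u : E) = (θ : E) + algebraMap Fq E a ∧ x = Multiplicative.toAdd (e u)} = q := by
  have : NeZero (q ^ h - 1) := ⟨by have : 1 < q ^ h := hcard ▸ Fintype.one_lt_card; omega⟩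
  have hfinrank : Module.finrank Fq E = h := Nat.pow_right_injective (hq ▸ Fintype.one_lt_card)
    (show q ^ _ = q ^ h by rw [← hcard, Module.card_eq_pow_finrank (K := Fq) (V := E), hq])
  have hdeg : (minpoly Fq (θ : E)).natDegree = h := by
    rw [minpoly.natDegree_eq_finrank_of_forall_mem_zpowers hθ, hfinrank]
  have hθF : (θ : E) ∉ Set.range (algebraMap Fq E) := fun hmem => by
    have := minpoly.natDegree_eq_one_iff.2 hmem
    omega
  exact ⟨setOf_pow_sub_mem_range_eq_boseChowlaSet e he, isBhg_boseChowlaSet e hθF hdeg.ge,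
    (ncard_boseChowlaSet e hθF).trans (Nat.card_eq_fintype_card.trans hq)⟩
end

section
/- For every positive integer g and every prime p with p ≡ 1 (mod g), there exists a B_2[g] set in Z/((p² − p)/g)Z with exactly p − 1 elements. -/
open Polynomial

theorem isBhg_image {G G' : Type*} [AddCommMonoid G] [AddCommMonoid G'] (e : G ≃+ G')
    {A : Set G} {h g : ℕ} (hA : IsBhg A h g) : IsBhg (e '' A) h g := by
  classical
  intro b s hs
  have hinj : Function.Injective (Multiset.map e.symm) := Multiset.map_injective e.symm.injective
  rw [← Finset.card_image_of_injective s hinj]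
  refine hA (e.symm b) _ fun M hM => ?_
  obtain ⟨M, hMs, rfl⟩ := Finset.mem_image.1 hM
  obtain ⟨hcard, hmem, hsum⟩ := hs M hMs
  refine ⟨by simp [hcard], fun x hx => ?_, by rw [← hsum, map_multiset_sum]⟩
  obtain ⟨y, hy, rfl⟩ := Multiset.mem_map.1 hx
  obtain ⟨a, ha, rfl⟩ := hmem y hy
  simpa using ha

theorem eq_and_eq_or_eq_and_eq_of_add_eq_of_mul_eq {R : Type*} [CommRing R] [IsDomain R]
    {x₁ y₁ x₂ y₂ : R} (hs : x₁ + y₁ = x₂ + y₂) (hp : x₁ * y₁ = x₂ * y₂) :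
    (x₁ = x₂ ∧ y₁ = y₂) ∨ (x₁ = y₂ ∧ y₁ = x₂) := by
  have h : (x₁ - x₂) * (x₁ - y₂) = 0 := by linear_combination x₁ * hs - hp
  rcases mul_eq_zero.1 h with h | h
  · have hx : x₁ = x₂ := sub_eq_zero.1 h
    exact Or.inl ⟨hx, by linear_combination hs - hx⟩
  · have hx : x₁ = y₂ := sub_eq_zero.1 h
    exact Or.inr ⟨hx, by linear_combination hs - hx⟩

theorem isBhg_two_of_injOn_of_mul_mem {G K : Type*} [AddCommMonoid G] [CommRing K] [IsDomain K]
    {A : Set G} (ψ : G →+ K) (hψ : Set.InjOn ψ A) (P : G → Finset K)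
    (hP : ∀ x ∈ A, ∀ y ∈ A, ψ x * ψ y ∈ P (x + y)) {g : ℕ} (hg : ∀ b, (P b).card ≤ g) :
    IsBhg A 2 g := by
  intro b s hs
  have hpair : ∀ M ∈ s, ∃ x ∈ A, ∃ y ∈ A, M = {x, y} ∧ x + y = b := by
    intro M hM
    obtain ⟨hcard, hmem, hsum⟩ := hs M hM
    obtain ⟨x, y, rfl⟩ := Multiset.card_eq_two.1 hcard
    exact ⟨x, hmem x (by simp), y, hmem y (by simp), rfl, by simpa using hsum⟩
  refine (Finset.card_le_card_of_injOn (fun M => (M.map ψ).prod) ?_ ?_).trans (hg b)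
  · intro M hM
    obtain ⟨x, hx, y, hy, rfl, rfl⟩ := hpair M hM
    simpa using hP x hx y hy
  · intro M₁ hM₁ M₂ hM₂ hprod
    obtain ⟨x₁, hx₁, y₁, hy₁, rfl, hb₁⟩ := hpair M₁ hM₁
    obtain ⟨x₂, hx₂, y₂, hy₂, rfl, rfl⟩ := hpair M₂ hM₂
    have hsum : ψ x₁ + ψ y₁ = ψ x₂ + ψ y₂ := by rw [← map_add, ← map_add, hb₁]
    simp only [Multiset.insert_eq_cons, Multiset.map_cons, Multiset.map_singleton,
      Multiset.prod_cons, Multiset.prod_singleton] at hprod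
    rcases eq_and_eq_or_eq_and_eq_of_add_eq_of_mul_eq hsum hprod with ⟨h, h'⟩ | ⟨h, h'⟩
    · rw [hψ hx₁ hx₂ h, hψ hy₁ hy₂ h']
    · rw [hψ hx₁ hy₂ h, hψ hy₁ hx₂ h', Multiset.pair_comm]

theorem card_nthRootsFinset_le {R : Type*} [CommRing R] [IsDomain R] (n : ℕ) (a : R) :
    (nthRootsFinset n a).card ≤ n := by
  classical
  rw [nthRootsFinset_def]
  exact (Multiset.toFinset_card_le _).trans (card_nthRoots n a)

def expGraph (m : ℕ) {M : Type*} [Monoid M] (θ : M) : Set (ZMod m × M) :=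
  Set.range fun t : ℕ => ((t : ZMod m), θ ^ t)

section expGraph

variable {M : Type*} [Monoid M] {m : ℕ} {θ : M}

theorem expGraph_snd_injOn (hm : m ∣ orderOf θ) (hθ : IsOfFinOrder θ) :
    Set.InjOn Prod.snd (expGraph m θ) := by
  rintro _ ⟨a, rfl⟩ _ ⟨c, rfl⟩ h
  have hac : a ≡ c [MOD m] := (hθ.pow_eq_pow_iff_modEq.1 h).of_dvd hm
  simp only [Prod.mk.injEq] at h ⊢
  exact ⟨(ZMod.natCast_eq_natCast_iff a c m).2 hac, h⟩

theorem ncard_range_pow (hθ : IsOfFinOrder θ) :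
    (Set.range (θ ^ · : ℕ → M)).ncard = orderOf θ := by
  classical
  rw [← Submonoid.coe_powers, hθ.powers_eq_image_range_orderOf, Set.ncard_coe_finset,
    Finset.card_image_of_injOn (by simpa using pow_injOn_Iio_orderOf), Finset.card_range]

theorem ncard_expGraph (hm : m ∣ orderOf θ) (hθ : IsOfFinOrder θ) :
    (expGraph m θ).ncard = orderOf θ := by
  rw [← (expGraph_snd_injOn hm hθ).ncard_image, expGraph, ← Set.range_comp]
  exact ncard_range_pow hθ

end expGraph

theorem snd_mul_snd_pow_eq_of_mem_expGraph {M : Type*} [CommMonoid M] {m g : ℕ} {θ : M}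
    (hmg : θ ^ (m * g) = 1) {x y : ZMod m × M} (hx : x ∈ expGraph m θ)
    (hy : y ∈ expGraph m θ) : (x.2 * y.2) ^ g = θ ^ ((x.1 + y.1).val * g) := by
  obtain ⟨a, rfl⟩ := hx
  obtain ⟨c, rfl⟩ := hy
  rw [← pow_add, ← pow_mul, ← Nat.cast_add, ZMod.val_natCast]
  exact pow_eq_pow_of_modEq ((Nat.mod_modEq (a + c) m).symm.mul_right' g) hmg

theorem isBhg_expGraph {K : Type*} [CommRing K] [IsDomain K] {m g : ℕ} {θ : K}
    (hm : m ∣ orderOf θ) (hθ : IsOfFinOrder θ) (hmg : θ ^ (m * g) = 1) (hg : 0 < g) :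
    IsBhg (expGraph m θ) 2 g :=
  isBhg_two_of_injOn_of_mul_mem (AddMonoidHom.snd _ _) (expGraph_snd_injOn hm hθ)
    (fun b => nthRootsFinset g (θ ^ (b.1.val * g)))
    (fun _ hx _ hy => (mem_nthRootsFinset hg _).2 (snd_mul_snd_pow_eq_of_mem_expGraph hmg hx hy))
    (fun _ => card_nthRootsFinset_le _ _)

theorem stmt_10_general (g p : ℕ) (hp : p.Prime) (hmod : p ≡ 1 [MOD g]) :
    ∃ A : Set (ZMod ((p ^ 2 - p) / g)), IsBhg A 2 g ∧ A.ncard = p - 1 := by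
  have := Fact.mk hp
  have hdvd : g ∣ p - 1 := (Nat.modEq_iff_dvd' hp.one_le).1 hmod.symm
  have hg : 0 < g := Nat.pos_of_dvd_of_pos hdvd (Nat.sub_pos_of_lt hp.one_lt)
  set m := (p - 1) / g
  have hmg : m * g = p - 1 := Nat.div_mul_cancel hdvd
  have hN : (p ^ 2 - p) / g = m * p := by
    rw [sq, ← Nat.mul_sub_one, ← hmg, mul_comm p, mul_right_comm, Nat.mul_div_cancel _ hg]
  have hcop : m.Coprime p := Nat.Coprime.coprime_dvd_left (Nat.div_dvd_of_dvd hdvd)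
    ((Nat.coprime_self_sub_left hp.one_le).2 (Nat.coprime_one_left p))
  obtain ⟨θ, hθ⟩ := IsCyclic.exists_ofOrder_eq_natCard (α := (ZMod p)ˣ)
  have hord : orderOf (θ : ZMod p) = m * g := by
    rw [orderOf_units, hθ, Nat.card_eq_fintype_card, ZMod.card_units, hmg]
  rw [hN]
  have hm : m ∣ orderOf (θ : ZMod p) := hord ▸ dvd_mul_right m g
  have hθfin : IsOfFinOrder (θ : ZMod p) :=
    orderOf_pos_iff.1 (by rw [hord, hmg]; exact Nat.sub_pos_of_lt hp.one_lt)
  let e := (ZMod.chineseRemainder hcop).symm.toAddEquiv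
  refine ⟨e '' expGraph m (θ : ZMod p),
    isBhg_image e (isBhg_expGraph hm hθfin (hord ▸ pow_orderOf_eq_one _) hg), ?_⟩
  rw [Set.ncard_image_of_injective _ e.injective, ncard_expGraph hm hθfin, hord, hmg]

theorem stmt_10 (g p : ℕ) (hg : 1 ≤ g) (hp : p.Prime) (hmod : p ≡ 1 [MOD g]) :
    ∃ A : Set (ZMod ((p ^ 2 - p) / g)), IsBhg A 2 g ∧ A.ncard = p - 1 :=
  stmt_10_general g p hp hmod
end

section
/- Let p be a prime, θ a primitive root modulo p, and g a positive integer dividing p − 1. Let H = ⟨(p−1)/g⟩ ≤ Z/(p−1)Z and φ : Z/(p−1)Z × Z/pZ → (Z/(p−1)Z)/H × Z/pZ be the natural projection on the first coordinate. Then the Ruzsa set R(p,θ) = {(a mod (p−1), θ^a mod p) : a = 1, ..., p−1} satisfies (R(p,θ) − R(p,θ)) ∩ ker(φ) = {0}, and hence |φ(R(p,θ))| = p − 1. -/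
theorem stmt_11 (p g : ℕ) (hp : p.Prime) (hg : 1 ≤ g) (hgp : g ∣ p - 1)
    (θ : (ZMod p)ˣ) (hθ : ∀ x : (ZMod p)ˣ, x ∈ Subgroup.zpowers θ)
    (H : AddSubgroup (ZMod (p - 1)))
    (hH : H = AddSubgroup.zmultiples ((((p - 1) / g : ℕ)) : ZMod (p - 1)))
    (φ : ZMod (p - 1) × ZMod p →+ (ZMod (p - 1) ⧸ H) × ZMod p)
    (hφ : φ = (QuotientAddGroup.mk' H).prodMap (AddMonoidHom.id (ZMod p)))
    (R : Set (ZMod (p - 1) × ZMod p))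
    (hR : R = {x | ∃ a : ℕ, 1 ≤ a ∧ a ≤ p - 1 ∧
      x = ((a : ZMod (p - 1)), ((θ : ZMod p) ^ a))}) :
    {x | ∃ r ∈ R, ∃ r' ∈ R, x = r - r'} ∩ {x | φ x = 0} = {0} ∧
    (φ '' R).ncard = p - 1 := by
  haveI : Fact p.Prime := ⟨hp⟩
  have hp1 : 1 ≤ p - 1 := by have := hp.two_le; omega
  have hord : orderOf θ = p - 1 := by
    rw [orderOf_eq_card_of_forall_mem_zpowers hθ, Nat.card_eq_fintype_card, ZMod.card_units]
  have key : ∀ a b : ℕ, 1 ≤ a → a ≤ p - 1 → 1 ≤ b → b ≤ p - 1 →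
      (θ : ZMod p) ^ a = (θ : ZMod p) ^ b → a = b := by
    intro a b ha1 ha2 hb1 hb2 hab
    have hu : θ ^ a = θ ^ b := Units.ext (by simpa using hab)
    have hmod : a ≡ b [MOD p - 1] := hord ▸ (pow_eq_pow_iff_modEq.mp hu)
    rcases le_total a b with h | h
    · have hd := (Nat.modEq_iff_dvd' h).mp hmod
      rcases Nat.eq_zero_or_pos (b - a) with h0 | h0
      · omega
      · have := Nat.le_of_dvd h0 hd; omega
    · have hd := (Nat.modEq_iff_dvd' h).mp hmod.symm
      rcases Nat.eq_zero_or_pos (a - b) with h0 | h0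
      · omega
      · have := Nat.le_of_dvd h0 hd; omega
  constructor
  · ext x
    simp only [Set.mem_inter_iff, Set.mem_setOf_eq, Set.mem_singleton_iff]
    constructor
    · rintro ⟨⟨r, hr, r', hr', hx⟩, hker⟩
      rw [hR] at hr hr'
      obtain ⟨a, ha1, ha2, rfl⟩ := hr
      obtain ⟨b, hb1, hb2, rfl⟩ := hr'
      subst hx hφ
      have h2 : (θ : ZMod p) ^ a - (θ : ZMod p) ^ b = 0 := congrArg Prod.snd hker
      have hab : a = b := key a b ha1 ha2 hb1 hb2 (sub_eq_zero.mp h2)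
      subst hab
      simp [Prod.ext_iff]
    · rintro rfl
      refine ⟨⟨((1 : ℕ), (θ : ZMod p) ^ 1), ?_, ((1 : ℕ), (θ : ZMod p) ^ 1), ?_, by simp⟩,
        map_zero φ⟩
      · rw [hR]; exact ⟨1, le_refl 1, hp1, rfl⟩
      · rw [hR]; exact ⟨1, le_refl 1, hp1, rfl⟩
  · have hRim : R = (fun a : ℕ => ((a : ZMod (p - 1)), (θ : ZMod p) ^ a)) '' Set.Icc 1 (p - 1) := by
      ext x
      simp only [hR, Set.mem_setOf_eq, Set.mem_image, Set.mem_Icc]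
      constructor
      · rintro ⟨a, h1, h2, rfl⟩; exact ⟨a, ⟨h1, h2⟩, rfl⟩
      · rintro ⟨a, ⟨h1, h2⟩, rfl⟩; exact ⟨a, h1, h2, rfl⟩
    rw [hRim, ← Set.image_comp]
    have hinj : Set.InjOn (φ ∘ fun a : ℕ => ((a : ZMod (p - 1)), (θ : ZMod p) ^ a))
        (Set.Icc 1 (p - 1)) := by
      intro a ha b hb hab
      subst hφ
      have h2 : (θ : ZMod p) ^ a = (θ : ZMod p) ^ b := congrArg Prod.snd hab
      exact key a b ha.1 ha.2 hb.1 hb.2 h2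
    rw [Set.ncard_image_of_injOn hinj, ← Finset.coe_Icc, Set.ncard_coe_finset, Nat.card_Icc]
    omega
end

section
/- Let p be a prime and θ a primitive root modulo p. Then the set R(p,θ) = {(a mod (p−1), θ^a mod p) : a = 1, ..., p−1} is a B_2 set in the group Z/(p−1)Z × Z/pZ with p − 1 elements. -/
lemma quad_lemma {K : Type*} [Field K] {x y u v : K}
    (hs : x + y = u + v) (hm : x * y = u * v) :
    (x = u ∧ y = v) ∨ (x = v ∧ y = u) := by
  have h : (x - u) * (x - v) = 0 := by linear_combination x * hs - hm
  rcases mul_eq_zero.mp h with h | h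
  · left
    have hx : x = u := sub_eq_zero.mp h
    exact ⟨hx, by rw [hx] at hs; exact add_left_cancel hs⟩
  · right
    have hx : x = v := sub_eq_zero.mp h
    refine ⟨hx, ?_⟩
    rw [hx] at hs
    have : v + y = v + u := by linear_combination hs
    exact add_left_cancel this

lemma mod_interval_eq {n a c : ℕ} (h : a ≡ c [MOD n]) (ha1 : 1 ≤ a) (ha2 : a ≤ n)
    (hc1 : 1 ≤ c) (hc2 : c ≤ n) : a = c := by
  rcases le_total a c with hle | hle
  · have hd : n ∣ c - a := (Nat.modEq_iff_dvd' hle).mp h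
    have : c - a = 0 := Nat.eq_zero_of_dvd_of_lt hd (by omega)
    omega
  · have hd : n ∣ a - c := (Nat.modEq_iff_dvd' hle).mp h.symm
    have : a - c = 0 := Nat.eq_zero_of_dvd_of_lt hd (by omega)
    omega

theorem stmt_12 (p : ℕ) (hp : p.Prime)
    (θ : (ZMod p)ˣ) (hθ : ∀ x : (ZMod p)ˣ, x ∈ Subgroup.zpowers θ) :
    IsBhg {x : ZMod (p - 1) × ZMod p | ∃ a : ℕ, 1 ≤ a ∧ a ≤ p - 1 ∧
        x = ((a : ZMod (p - 1)), ((θ : ZMod p) ^ a))} 2 1 ∧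
    Set.ncard {x : ZMod (p - 1) × ZMod p | ∃ a : ℕ, 1 ≤ a ∧ a ≤ p - 1 ∧
        x = ((a : ZMod (p - 1)), ((θ : ZMod p) ^ a))} = p - 1 := by
  haveI := Fact.mk hp
  have horder : orderOf θ = p - 1 := by
    rw [orderOf_eq_card_of_forall_mem_zpowers hθ, Nat.card_eq_fintype_card,
      ZMod.card_units]
  -- injectivity of a ↦ θ^a on [1, p-1]
  have hinj : ∀ a c : ℕ, 1 ≤ a → a ≤ p - 1 → 1 ≤ c → c ≤ p - 1 →
      (θ : ZMod p) ^ a = (θ : ZMod p) ^ c → a = c := by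
    intro a c ha1 ha2 hc1 hc2 h
    have hu : θ ^ a = θ ^ c := Units.ext (by push_cast; exact h)
    have hmod : a ≡ c [MOD p - 1] := by
      rw [← horder]; exact pow_eq_pow_iff_modEq.mp hu
    exact mod_interval_eq hmod ha1 ha2 hc1 hc2
  constructor
  · intro b s hs
    rw [Finset.card_le_one]
    intro m₁ hm₁ m₂ hm₂
    obtain ⟨hc₁, hA₁, hsum₁⟩ := hs m₁ hm₁
    obtain ⟨hc₂, hA₂, hsum₂⟩ := hs m₂ hm₂
    obtain ⟨x, y, rfl⟩ := Multiset.card_eq_two.mp hc₁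
    obtain ⟨u, v, rfl⟩ := Multiset.card_eq_two.mp hc₂
    obtain ⟨a, ha1, ha2, hax⟩ := hA₁ x (by simp)
    obtain ⟨a', ha'1, ha'2, hay⟩ := hA₁ y (by simp)
    obtain ⟨c, hc1v, hc2v, hcu⟩ := hA₂ u (by simp)
    obtain ⟨c', hc'1, hc'2, hcv⟩ := hA₂ v (by simp)
    rw [Multiset.sum_pair] at hsum₁ hsum₂
    have hsumeq : x + y = u + v := hsum₁.trans hsum₂.symm
    subst hax hay hcu hcv
    have h1 : ((a : ZMod (p-1)) + a') = ((c : ZMod (p-1)) + c') :=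
      congrArg Prod.fst hsumeq
    have h2 : (θ : ZMod p) ^ a + (θ : ZMod p) ^ a'
        = (θ : ZMod p) ^ c + (θ : ZMod p) ^ c' := congrArg Prod.snd hsumeq
    have hmod : a + a' ≡ c + c' [MOD p - 1] := by
      rw [← ZMod.natCast_eq_natCast_iff]; push_cast; exact h1
    have hpowu : θ ^ (a + a') = θ ^ (c + c') := by
      rw [pow_eq_pow_iff_modEq, horder]; exact hmod
    have hmul : (θ : ZMod p) ^ a * (θ : ZMod p) ^ a'
        = (θ : ZMod p) ^ c * (θ : ZMod p) ^ c' := by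
      have := congrArg (Units.val) hpowu
      push_cast [pow_add] at this
      exact this
    rcases quad_lemma h2 hmul with ⟨hx, hy⟩ | ⟨hx, hy⟩
    · have e1 : a = c := hinj a c ha1 ha2 hc1v hc2v hx
      have e2 : a' = c' := hinj a' c' ha'1 ha'2 hc'1 hc'2 hy
      rw [e1, e2]
    · have e1 : a = c' := hinj a c' ha1 ha2 hc'1 hc'2 hx
      have e2 : a' = c := hinj a' c ha'1 ha'2 hc1v hc2v hy
      rw [e1, e2]
      exact Multiset.pair_comm _ _
  · have hset : {x : ZMod (p - 1) × ZMod p | ∃ a : ℕ, 1 ≤ a ∧ a ≤ p - 1 ∧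
        x = ((a : ZMod (p - 1)), ((θ : ZMod p) ^ a))}
        = (fun a : ℕ => ((a : ZMod (p - 1)), (θ : ZMod p) ^ a)) ''
          ↑(Finset.Icc 1 (p - 1)) := by
      ext x
      simp only [Set.mem_setOf_eq, Set.mem_image, Finset.coe_Icc, Set.mem_Icc]
      constructor
      · rintro ⟨a, h1, h2, rfl⟩; exact ⟨a, ⟨h1, h2⟩, rfl⟩
      · rintro ⟨a, ⟨h1, h2⟩, rfl⟩; exact ⟨a, h1, h2, rfl⟩
    rw [hset, Set.ncard_image_of_injOn, Set.ncard_coe_finset, Nat.card_Icc]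
    · omega
    · intro a ha c hc h
      simp only [Finset.coe_Icc, Set.mem_Icc] at ha hc
      exact hinj a c ha.1 ha.2 hc.1 hc.2 (congrArg Prod.snd h)
end

section
/- For every positive integer g and every prime p with p ≡ 1 (mod g), the maximal size of a B_2[g] set in Z/((p² − p)/g)Z is at least p − 1, i.e., f_2((p² − p)/g, g) ≥ p − 1. -/
/-- `fBhg N h g` is the maximum cardinality of a `B_h[g]` set in `ZMod N`. -/
noncomputable def fBhg (N h g : ℕ) : ℕ :=
  sSup {n : ℕ | ∃ A : Set (ZMod N), IsBhg A h g ∧ A.ncard = n}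

lemma vieta_aux {K : Type*} [Field K] {a b c d : K} (hs : a + b = c + d)
    (hp : a * b = c * d) : (a = c ∧ b = d) ∨ (a = d ∧ b = c) := by
  have h : (c - a) * (c - b) = 0 := by
    have h1 : (c - a) * (c - b) = c * c - (a + b) * c + a * b := by ring
    rw [h1, hs, hp]; ring
  rcases mul_eq_zero.mp h with h' | h'
  · have hac : a = c := (sub_eq_zero.mp h').symm
    left
    refine ⟨hac, ?_⟩
    subst hac
    exact add_left_cancel hs
  · have hbc : b = c := (sub_eq_zero.mp h').symm
    right
    subst hbc
    have : a = d := by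
      have := hs
      rw [add_comm b d] at this
      exact add_right_cancel this
    exact ⟨this, rfl⟩

lemma zmod_val_inj {n : ℕ} [NeZero n] {a b : ZMod n} (h : a.val = b.val) : a = b := by
  have ha : ((a.val : ℕ) : ZMod n) = a := by
    rw [ZMod.natCast_val, ZMod.cast_id]
  have hb : ((b.val : ℕ) : ZMod n) = b := by
    rw [ZMod.natCast_val, ZMod.cast_id]
  rw [← ha, ← hb, h]

/-- Ruzsa-type construction: a `B_2[g]` set of size `p-1` in `ZMod p × ZMod r`
where `r * g = p - 1`. -/
lemma key_construction (p g r : ℕ) [hfp : Fact p.Prime] (hg : 0 < g)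
    (hr : r * g = p - 1) :
    ∃ A : Set (ZMod p × ZMod r), IsBhg A 2 g ∧ A.ncard = p - 1 := by
  have hp := hfp.out
  have hp2 : 2 ≤ p := hp.two_le
  have hn1 : 1 ≤ p - 1 := by omega
  haveI : NeZero (p - 1) := ⟨by omega⟩
  haveI : NeZero g := ⟨by omega⟩
  have hrpos : 0 < r := by
    rcases Nat.eq_zero_or_pos r with h | h
    · exfalso; rw [h] at hr; simp at hr; omega
    · exact h
  obtain ⟨θ, hθ⟩ := IsCyclic.exists_generator (α := (ZMod p)ˣ)
  have horder : orderOf θ = p - 1 := by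
    rw [orderOf_eq_card_of_forall_mem_zpowers hθ, Nat.card_eq_fintype_card,
      ZMod.card_units]
  -- the discrete exponential
  set Θ : ZMod (p - 1) → ZMod p := fun i => ((θ ^ i.val : (ZMod p)ˣ) : ZMod p) with hΘ
  have Θinj : Function.Injective Θ := by
    intro i j h
    have h' : (θ : (ZMod p)ˣ) ^ i.val = θ ^ j.val := Units.ext h
    have hmod : i.val ≡ j.val [MOD p - 1] := by
      have h2 := pow_eq_pow_iff_modEq.mp h'
      rwa [horder] at h2
    have hi := ZMod.val_lt i
    have hj := ZMod.val_lt j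
    have : i.val = j.val := by
      have := hmod
      unfold Nat.ModEq at this
      rwa [Nat.mod_eq_of_lt hi, Nat.mod_eq_of_lt hj] at this
    exact zmod_val_inj this
  have Θhom : ∀ i j : ZMod (p - 1), Θ (i + j) = Θ i * Θ j := by
    intro i j
    have h1 : (θ : (ZMod p)ˣ) ^ (i + j).val = θ ^ (i.val + j.val) := by
      rw [pow_eq_pow_iff_modEq, horder, ZMod.val_add]
      exact Nat.mod_modEq _ _
    simp only [hΘ]
    rw [h1, pow_add, Units.val_mul]
  set f : ZMod (p - 1) → ZMod p × ZMod r := fun i => (Θ i, (i.val : ZMod r)) with hf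
  have finj : Function.Injective f := by
    intro i j h
    exact Θinj (congrArg Prod.fst h)
  have hdvd_r : r ∣ p - 1 := ⟨g, hr.symm⟩
  have sndhom : ∀ i j : ZMod (p - 1),
      (((i + j).val : ℕ) : ZMod r) = ((i.val : ℕ) : ZMod r) + ((j.val : ℕ) : ZMod r) := by
    intro i j
    rw [ZMod.val_add, ← Nat.cast_add]
    rw [ZMod.natCast_eq_natCast_iff]
    exact Nat.ModEq.of_dvd hdvd_r (Nat.mod_modEq _ _)
  refine ⟨Set.range f, ?_, ?_⟩
  · -- B_2[g] property
    intro b s hs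
    set ψ : (ZMod p × ZMod r) → ZMod (p - 1) := Function.invFun f with hψdef
    have hψ : ∀ i, ψ (f i) = i := Function.leftInverse_invFun finj
    have rep : ∀ m ∈ s, ∃ i j : ZMod (p - 1), m = {f i, f j} ∧ f i + f j = b := by
      intro m hm
      obtain ⟨hcard, hmem, hsum⟩ := hs m hm
      obtain ⟨x, y, hxy⟩ := Multiset.card_eq_two.mp hcard
      have hx : x ∈ Set.range f := hmem x (by rw [hxy]; simp)
      have hy : y ∈ Set.range f := hmem y (by rw [hxy]; simp)
      obtain ⟨i, hi⟩ := hx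
      obtain ⟨j, hj⟩ := hy
      refine ⟨i, j, by rw [hxy, hi, hj], ?_⟩
      rw [hi, hj]
      rw [hxy] at hsum
      simpa using hsum
    set Φ : Multiset (ZMod p × ZMod r) → ZMod g :=
      fun m => ((((m.map ψ).sum).val / r : ℕ) : ZMod g) with hΦdef
    have sumψ : ∀ i j : ZMod (p - 1), (((({f i, f j} : Multiset _)).map ψ).sum) = i + j := by
      intro i j
      simp [hψ]
    -- the second coordinate of b determines i+j up to g choices
    have snd_eq : ∀ i j : ZMod (p - 1), f i + f j = b →
        (((i + j).val : ℕ) : ZMod r) = b.2 := by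
      intro i j hb
      rw [sndhom]
      have : (f i + f j).2 = b.2 := by rw [hb]
      simpa [hf] using this
    have inj : Set.InjOn Φ ↑s := by
      intro m hm m' hm' hΦeq
      obtain ⟨i, j, hmij, hbij⟩ := rep m hm
      obtain ⟨k, l, hmkl, hbkl⟩ := rep m' hm'
      have hc2 : (((i + j).val : ℕ) : ZMod r) = (((k + l).val : ℕ) : ZMod r) := by
        rw [snd_eq i j hbij, snd_eq k l hbkl]
      have hmodr : (i + j).val ≡ (k + l).val [MOD r] :=
        (ZMod.natCast_eq_natCast_iff _ _ _).mp hc2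
      have hΦ2 : (((i + j).val / r : ℕ) : ZMod g) = (((k + l).val / r : ℕ) : ZMod g) := by
        have h1 : Φ m = (((i + j).val / r : ℕ) : ZMod g) := by
          rw [hΦdef]; simp only; rw [hmij, sumψ]
        have h2 : Φ m' = (((k + l).val / r : ℕ) : ZMod g) := by
          rw [hΦdef]; simp only; rw [hmkl, sumψ]
        rw [← h1, ← h2, hΦeq]
      have hmodg : (i + j).val / r ≡ (k + l).val / r [MOD g] :=
        (ZMod.natCast_eq_natCast_iff _ _ _).mp hΦ2
      have hgr : g * r = p - 1 := by rw [mul_comm]; exact hr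
      have hlt1 : (i + j).val / r < g := by
        rw [Nat.div_lt_iff_lt_mul hrpos, hgr]
        exact ZMod.val_lt _
      have hlt2 : (k + l).val / r < g := by
        rw [Nat.div_lt_iff_lt_mul hrpos, hgr]
        exact ZMod.val_lt _
      have hdiveq : (i + j).val / r = (k + l).val / r := by
        have := hmodg
        unfold Nat.ModEq at this
        rwa [Nat.mod_eq_of_lt hlt1, Nat.mod_eq_of_lt hlt2] at this
      have hmodreq : (i + j).val % r = (k + l).val % r := hmodr
      have hvaleq : (i + j).val = (k + l).val := by
        have e1 := Nat.div_add_mod (i + j).val r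
        have e2 := Nat.div_add_mod (k + l).val r
        have e3 : r * ((i + j).val / r) = r * ((k + l).val / r) := by rw [hdiveq]
        omega
      have hceq : i + j = k + l := zmod_val_inj hvaleq
      -- now use the first coordinates and Vieta
      have hsum1 : Θ i + Θ j = b.1 := by
        have : (f i + f j).1 = b.1 := by rw [hbij]
        simpa [hf] using this
      have hsum2 : Θ k + Θ l = b.1 := by
        have : (f k + f l).1 = b.1 := by rw [hbkl]
        simpa [hf] using this
      have hprod : Θ i * Θ j = Θ k * Θ l := by
        rw [← Θhom, ← Θhom, hceq]
      rcases vieta_aux (hsum1.trans hsum2.symm) hprod with ⟨h1, h2⟩ | ⟨h1, h2⟩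
      · rw [hmij, hmkl, Θinj h1, Θinj h2]
      · rw [hmij, hmkl, Θinj h1, Θinj h2, Multiset.pair_comm]
    have := Finset.card_le_card_of_injOn Φ (fun a _ => Finset.mem_univ (Φ a)) inj
    simpa [ZMod.card g] using this
  · -- cardinality
    rw [← Set.image_univ, Set.ncard_image_of_injective _ finj, Set.ncard_univ,
      Nat.card_zmod]

theorem stmt_17 (g p : ℕ) (hg : 1 ≤ g) (hp : p.Prime) (hmod : p ≡ 1 [MOD g]) :
    p - 1 ≤ fBhg ((p ^ 2 - p) / g) 2 g := by
  haveI : Fact p.Prime := ⟨hp⟩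
  have hp2 : 2 ≤ p := hp.two_le
  have hdvd : g ∣ p - 1 := (Nat.modEq_iff_dvd' (by omega)).mp hmod.symm
  set r : ℕ := (p - 1) / g with hrdef
  have hr : r * g = p - 1 := Nat.div_mul_cancel hdvd
  have hsq : p ^ 2 - p = p * (p - 1) := by
    have h1 : p ≤ p ^ 2 := by nlinarith
    zify [h1, show 1 ≤ p by omega]
    ring
  have hN : (p ^ 2 - p) / g = p * r := by
    rw [hsq, hrdef, Nat.mul_div_assoc p hdvd]
  have hrpos : 0 < r := by
    rcases Nat.eq_zero_or_pos r with h | h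
    · exfalso; rw [h] at hr; simp at hr; omega
    · exact h
  have hrle : r ≤ p - 1 := Nat.le_of_dvd (by omega) ⟨g, hr.symm⟩
  have hcop : Nat.Coprime p r := by
    rw [Nat.Prime.coprime_iff_not_dvd hp]
    intro hdv
    have := Nat.le_of_dvd hrpos hdv
    omega
  obtain ⟨A', hA', hcard'⟩ := key_construction p g r (by omega) hr
  set E := ZMod.chineseRemainder hcop with hE
  set A : Set (ZMod (p * r)) := ⇑E.symm '' A' with hA
  have hcardA : A.ncard = p - 1 := by
    rw [hA, Set.ncard_image_of_injective _ E.symm.injective, hcard']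
  have hBhg : IsBhg A 2 g := by
    intro b s hs
    have hinj : Function.Injective (Multiset.map ⇑E) :=
      Multiset.map_injective E.injective
    rw [← Finset.card_image_of_injective s hinj]
    apply hA' (E b)
    intro m' hm'
    obtain ⟨m, hm, rfl⟩ := Finset.mem_image.mp hm'
    obtain ⟨hcard, hmem, hsum⟩ := hs m hm
    refine ⟨by simpa using hcard, ?_, ?_⟩
    · intro x' hx'
      obtain ⟨x, hx, rfl⟩ := Multiset.mem_map.mp hx'
      have := hmem x hx
      rw [hA] at this
      obtain ⟨a, ha, rfl⟩ := this
      rwa [RingEquiv.apply_symm_apply]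
    · rw [← map_multiset_sum E m, hsum]
  rw [hN]
  unfold fBhg
  haveI : NeZero (p * r) := ⟨by positivity⟩
  apply le_csSup
  · refine ⟨p * r, fun n hn => ?_⟩
    obtain ⟨B, _, hB⟩ := hn
    rw [← hB]
    calc B.ncard ≤ (Set.univ : Set (ZMod (p * r))).ncard :=
          Set.ncard_le_ncard (Set.subset_univ B) Set.finite_univ
      _ = p * r := by rw [Set.ncard_univ, Nat.card_zmod]
  · exact ⟨A, hBhg, hcardA⟩
end

section
/- For every positive integer g, prime power q, and integer h ≥ 2, if q^d ≡ 1 (mod g) for some divisor d of h with d ≠ h, then f_h((q^h − 1)/g, g) ≥ q, where f_h(N,g) is the maximum size of a B_h[g] set in Z/NZ. -/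
open Polynomial

section Helpers

variable {K : Type*} [Field K]

private lemma pow_pow_fixed {q : ℕ} {x : K} (hx : x ^ q = x) : ∀ m : ℕ, x ^ q ^ m = x
  | 0 => by simp
  | m + 1 => by rw [pow_succ, pow_mul, pow_pow_fixed hx m, hx]

private lemma key_frob {p : ℕ} [Fact p.Prime] [CharP K p] {q n d : ℕ}
    (hqpn : q = p ^ n) {θ u c c' : K}
    (hθ : θ ^ q ^ d ≠ θ)
    (hu : u ^ q ^ d = u) (hc : c ^ q = c) (hc' : c' ^ q = c')
    (heq : θ + c = u * (θ + c')) : u = 1 := by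
  subst hqpn
  by_contra hne
  apply hθ
  have h1 : θ * (1 - u) = u * c' - c := by linear_combination heq
  have h2 := congrArg (iterateFrobenius K p (n * d)) h1
  simp only [map_mul, map_sub, map_one, iterateFrobenius_def] at h2
  rw [pow_mul] at h2
  rw [hu, pow_pow_fixed hc d, pow_pow_fixed hc' d] at h2
  have h3 : θ ^ (p ^ n) ^ d * (1 - u) = θ * (1 - u) := by rw [h2, h1]
  exact mul_right_cancel₀ (sub_ne_zero.mpr fun hh => hne hh.symm) h3

private lemma gen_pow_ne [Fintype K] {q H d : ℕ} (hq : 2 ≤ q) (hd : 0 < d) (hdh : d < H)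
    (cardK : Fintype.card K = q ^ H) (θ : Kˣ) (hθ : ∀ x : Kˣ, x ∈ Subgroup.zpowers θ) :
    ((θ : K)) ^ q ^ d ≠ (θ : K) := by
  classical
  intro hE
  have hord : orderOf θ = q ^ H - 1 := by
    rw [orderOf_eq_card_of_forall_mem_zpowers hθ, Nat.card_eq_fintype_card,
      Fintype.card_units, cardK]
  have hqd : 2 ≤ q ^ d := le_trans hq (Nat.le_self_pow hd.ne' q)
  have hval : (θ : K) ^ (q ^ d - 1) * θ = (1 : K) * θ := by
    rw [← pow_succ, Nat.sub_add_cancel (by omega), hE, one_mul]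
  have hval2 : (θ : K) ^ (q ^ d - 1) = 1 := mul_right_cancel₀ (Units.ne_zero θ) hval
  have hu : θ ^ (q ^ d - 1) = 1 := by
    ext; push_cast; exact hval2
  have hdvd := orderOf_dvd_of_pow_eq_one hu
  rw [hord] at hdvd
  have hle := Nat.le_of_dvd (by omega) hdvd
  have hlt : q ^ d < q ^ H := Nat.pow_lt_pow_right hq hdh
  omega

end Helpers

set_option maxHeartbeats 2000000 in
set_option synthInstance.maxHeartbeats 400000 in
private theorem main_exists (p n q h g d : ℕ) [hpf : Fact p.Prime] (hqpn : q = p ^ n)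
    (hn : 0 < n) (hh : 2 ≤ h)
    (hg : 1 ≤ g) (hd0 : 0 < d) (hdvd : d ∣ h) (hdne : d ≠ h)
    (hmod : q ^ d ≡ 1 [MOD g]) :
    ∃ A : Set (ZMod ((q ^ h - 1) / g)), IsBhg A h g ∧ A.ncard = q := by
  classical
  have hp2 : 2 ≤ p := hpf.out.two_le
  have hq2 : 2 ≤ q := by rw [hqpn]; exact le_trans hp2 (Nat.le_self_pow hn.ne' p)
  have hdh : d < h := lt_of_le_of_ne (Nat.le_of_dvd (by omega) hdvd) hdne
  have hqd2 : 2 ≤ q ^ d := le_trans hq2 (Nat.le_self_pow hd0.ne' q)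
  have hgd : g ∣ q ^ d - 1 := (Nat.modEq_iff_dvd' (by omega)).mp hmod.symm
  have hdh' : q ^ d - 1 ∣ q ^ h - 1 := by
    obtain ⟨k, hk⟩ := hdvd
    rw [hk, pow_mul]
    simpa using Nat.sub_dvd_pow_sub_pow (q ^ d) 1 k
  have hgh : g ∣ q ^ h - 1 := hgd.trans hdh'
  have hq2h : 2 ≤ q ^ h := le_trans hq2 (Nat.le_self_pow (by omega) q)
  set N := (q ^ h - 1) / g with hNdef
  have hN : N * g = q ^ h - 1 := Nat.div_mul_cancel hgh
  have hNpos : 0 < N := by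
    rcases Nat.eq_zero_or_pos N with h0 | h0
    · rw [h0, zero_mul] at hN; omega
    · exact h0
  haveI : NeZero N := ⟨hNpos.ne'⟩
  -- the field
  set K := GaloisField p (n * h) with hKdef
  haveI : Fintype K := Fintype.ofFinite K
  have cardK : Fintype.card K = q ^ h := by
    have hc := GaloisField.card p (n * h) (by positivity)
    rw [Nat.card_eq_fintype_card] at hc
    rw [hc, hqpn, pow_mul]
  obtain ⟨θ, hθ⟩ := IsCyclic.exists_generator (α := Kˣ)
  have hord : orderOf θ = q ^ h - 1 := by
    rw [orderOf_eq_card_of_forall_mem_zpowers hθ, Nat.card_eq_fintype_card,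
      Fintype.card_units, cardK]
  have hne_pow : ∀ d' : ℕ, 0 < d' → d' < h → ((θ : K)) ^ q ^ d' ≠ (θ : K) :=
    fun d' h1 h2 => gen_pow_ne hq2 h1 h2 cardK θ hθ
  -- the subfield with q elements
  set F : Subfield K := (iterateFrobenius K p n).eqLocusField (RingHom.id K) with hFdef
  have memF : ∀ x : K, x ∈ F ↔ x ^ q = x := by
    intro x
    show iterateFrobenius K p n x = RingHom.id K x ↔ _
    rw [iterateFrobenius_def, RingHom.id_apply, hqpn]
  -- counting F
  have hScard : (Finset.univ.filter (fun x : K => x ^ q = x)).card = q := by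
    set Sf := Finset.univ.filter (fun x : K => x ^ q = x) with hSf
    have hup : Sf.card ≤ q := by
      have hne : (X ^ q - X : K[X]) ≠ 0 :=
        FiniteField.X_pow_card_sub_X_ne_zero K (by omega)
      have hSub : Sf ⊆ (roots (X ^ q - X : K[X])).toFinset := by
        intro x hx
        simp only [hSf, Finset.mem_filter] at hx
        rw [Multiset.mem_toFinset, mem_roots hne]
        simp [IsRoot, sub_eq_zero, hx.2]
      calc Sf.card ≤ (roots (X ^ q - X : K[X])).toFinset.card := Finset.card_le_card hSub
        _ ≤ Multiset.card (roots (X ^ q - X : K[X])) := Multiset.toFinset_card_le _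
        _ ≤ (X ^ q - X : K[X]).natDegree := card_roots' _
        _ = q := FiniteField.X_pow_card_sub_X_natDegree_eq K (by omega)
    have hq1dvd : q - 1 ∣ q ^ h - 1 := by
      have := Nat.sub_dvd_pow_sub_pow q 1 h
      rwa [one_pow] at this
    set t := (q ^ h - 1) / (q - 1) with htdef
    have ht : t * (q - 1) = q ^ h - 1 := Nat.div_mul_cancel hq1dvd
    have htpos : 0 < t := by
      rcases Nat.eq_zero_or_pos t with h0 | h0
      · rw [h0, zero_mul] at ht; omega
      · exact h0
    set f : Fin (q - 1) → K := fun i => ((θ ^ (t * (i : ℕ)) : Kˣ) : K) with hf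
    have hbound : ∀ i : Fin (q - 1), t * (i : ℕ) < orderOf θ := by
      intro i
      rw [hord, ← ht]
      exact (Nat.mul_lt_mul_left htpos).mpr i.isLt
    have hfinj : Function.Injective f := by
      intro i j hij
      have h1 : θ ^ (t * (i : ℕ)) = θ ^ (t * (j : ℕ)) := Units.ext hij
      have h2 := pow_injOn_Iio_orderOf (Set.mem_Iio.mpr (hbound i)) (Set.mem_Iio.mpr (hbound j)) h1
      exact Fin.ext (Nat.eq_of_mul_eq_mul_left htpos h2)
    have himg : ∀ i : Fin (q - 1), f i ∈ Sf := by
      intro i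
      have hw : (θ ^ (t * (i : ℕ))) ^ (q - 1) = 1 := by
        rw [← pow_mul]
        apply orderOf_dvd_iff_pow_eq_one.mp
        rw [hord, ← ht]
        exact ⟨(i : ℕ), by ring⟩
      have hpow : (θ ^ (t * (i : ℕ))) ^ q = θ ^ (t * (i : ℕ)) := by
        have hq1 : q - 1 + 1 = q := by omega
        have h' : (θ ^ (t * (i : ℕ))) ^ (q - 1 + 1) = θ ^ (t * (i : ℕ)) := by
          rw [pow_succ, hw, one_mul]
        rwa [hq1] at h'
      simp only [hSf, Finset.mem_filter, Finset.mem_univ, true_and, hf]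
      exact_mod_cast congrArg Units.val hpow
    have hlow : q ≤ Sf.card := by
      have hsub : insert (0 : K) (Finset.image f Finset.univ) ⊆ Sf := by
        intro x hx
        rcases Finset.mem_insert.mp hx with h0 | h1
        · subst h0
          simp only [hSf, Finset.mem_filter, Finset.mem_univ, true_and]
          exact zero_pow (by omega)
        · obtain ⟨i, _, rfl⟩ := Finset.mem_image.mp h1
          exact himg i
      have hcard : (insert (0 : K) (Finset.image f Finset.univ)).card = q := by
        rw [Finset.card_insert_of_notMem]
        · rw [Finset.card_image_of_injective _ hfinj, Finset.card_univ, Fintype.card_fin]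
          omega
        · intro hmem
          obtain ⟨i, _, hi⟩ := Finset.mem_image.mp hmem
          exact Units.ne_zero _ hi
      calc q = (insert (0 : K) (Finset.image f Finset.univ)).card := hcard.symm
        _ ≤ Sf.card := Finset.card_le_card hsub
    omega
  have hcardF : Fintype.card F = q := by
    have h1 : Fintype.card F = (Finset.univ.filter (fun x : K => x ∈ F)).card :=
      Fintype.card_subtype _
    have h2 : (Finset.univ.filter (fun x : K => x ∈ F))
        = (Finset.univ.filter (fun x : K => x ^ q = x)) := by
      apply Finset.filter_congr
      intro x _
      simpa using memF x
    rw [h1, h2, hScard]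
  -- field degree
  have hrank : Module.finrank F K = h := by
    have hc := Module.card_eq_pow_finrank (K := F) (V := K)
    rw [cardK, hcardF] at hc
    exact (Nat.pow_right_injective hq2 hc.symm)
  have hadj : IntermediateField.adjoin F {((θ : K))} = ⊤ := by
    rw [eq_top_iff]
    rintro x -
    by_cases hx : x = 0
    · exact hx ▸ zero_mem _
    · obtain ⟨k, hk⟩ := hθ (Units.mk0 x hx)
      have hk' : θ ^ k = Units.mk0 x hx := hk
      have hk'' : ((θ ^ k : Kˣ) : K) = x := by rw [hk', Units.val_mk0]
      have hxk : x = ((θ : K)) ^ k := by exact_mod_cast hk''.symm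
      rw [hxk]
      exact zpow_mem (IntermediateField.mem_adjoin_simple_self F _) k
  have hmin : (minpoly F ((θ : K))).natDegree = h := by
    have hint : IsIntegral F ((θ : K)) := IsIntegral.of_finite F _
    rw [← IntermediateField.adjoin.finrank hint]
    rw [show IntermediateField.adjoin F {((θ : K))} = ⊤ from hadj]
    rw [IntermediateField.finrank_top', hrank]
  -- uniqueness of monic annihilating polynomials of degree h
  have hpoly : ∀ P Q : Polynomial F, P.Monic → Q.Monic → P.natDegree = h → Q.natDegree = h →
      Polynomial.aeval ((θ : K)) P = Polynomial.aeval ((θ : K)) Q → P = Q := by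
    intro P Q hP hQ hPd hQd hev
    by_contra hne
    have hsub : P - Q ≠ 0 := sub_ne_zero.mpr hne
    have hdPQ : P.degree = Q.degree := by
      rw [degree_eq_natDegree hP.ne_zero, degree_eq_natDegree hQ.ne_zero, hPd, hQd]
    have hdlt := degree_sub_lt hdPQ hP.ne_zero (by rw [hP.leadingCoeff, hQ.leadingCoeff])
    rw [degree_eq_natDegree hP.ne_zero, hPd] at hdlt
    have hlt : (P - Q).natDegree < h := (natDegree_lt_iff_degree_lt hsub).mpr hdlt
    have hdvd := minpoly.dvd F ((θ : K)) (p := P - Q) (by rw [map_sub, hev, sub_self])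
    have hle := Polynomial.natDegree_le_of_dvd hdvd hsub
    omega
  -- θ + c is nonzero for c in F
  have hne0 : ∀ c : F, (θ : K) + (c : K) ≠ 0 := by
    intro c hc0
    have hcF : ((c : K)) ^ q = (c : K) := (memF c).mp c.2
    have hth : (θ : K) = -(c : K) := by linear_combination hc0
    apply hne_pow 1 one_pos (by omega)
    rw [pow_one, hth, hqpn, ← iterateFrobenius_def, map_neg, iterateFrobenius_def, ← hqpn, hcF]
  -- discrete logs
  have hgenkC : ∀ c : F, ∃ k : ℕ, ((θ ^ k : Kˣ) : K) = (θ : K) + (c : K) := by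
    intro c
    have hmem := hθ (Units.mk0 ((θ : K) + (c : K)) (hne0 c))
    rw [← mem_powers_iff_mem_zpowers] at hmem
    obtain ⟨k, hk⟩ := hmem
    have hk' : θ ^ k = Units.mk0 ((θ : K) + (c : K)) (hne0 c) := hk
    exact ⟨k, by rw [hk', Units.val_mk0]⟩
  set kf : F → ℕ := fun c => (hgenkC c).choose with hkfdef
  have hkf : ∀ c : F, ((θ ^ kf c : Kˣ) : K) = (θ : K) + (c : K) := fun c => (hgenkC c).choose_spec
  set aMap : F → ZMod N := fun c => ((kf c : ℕ) : ZMod N) with haMapdef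
  -- g-th roots fixed by q^d power map
  obtain ⟨mg, hmg⟩ : ∃ m, q ^ d = g * m + 1 := by
    obtain ⟨m, hm⟩ := hgd
    exact ⟨m, by rw [← hm]; omega⟩
  have hpow_fix : ∀ u : Kˣ, u ^ g = 1 → ((u : K)) ^ q ^ d = (u : K) := by
    intro u hu
    have hval : ((u : K)) ^ g = 1 := by rw [← Units.val_pow_eq_pow_val, hu, Units.val_one]
    calc ((u : K)) ^ q ^ d = (((u : K)) ^ g) ^ mg * (u : K) := by
          rw [← pow_mul, ← pow_succ, ← hmg]
      _ = (u : K) := by rw [hval, one_pow, one_mul]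
  have hordZ : ∀ i : ℤ, ((N : ℤ) * g) ∣ i → θ ^ i = 1 := by
    intro i hi
    apply orderOf_dvd_iff_zpow_eq_one.mp
    rw [hord, ← hN]
    exact_mod_cast hi
  -- injectivity of aMap
  have hamap_inj : Function.Injective aMap := by
    intro c c' hcc
    have hdZ : (N : ℤ) ∣ (kf c : ℤ) - (kf c' : ℤ) := by
      rw [← ZMod.intCast_zmod_eq_zero_iff_dvd]
      push_cast
      rw [sub_eq_zero]
      exact_mod_cast hcc
    set u : Kˣ := θ ^ ((kf c : ℤ) - (kf c' : ℤ)) with hu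
    have hug : u ^ g = 1 := by
      rw [hu, ← zpow_natCast, ← zpow_mul]
      apply hordZ
      exact mul_dvd_mul_right hdZ (g : ℤ)
    have hmulu : u * θ ^ kf c' = θ ^ kf c := by
      rw [hu, ← zpow_natCast θ (kf c'), ← zpow_add, sub_add_cancel, zpow_natCast]
    have heqK : (θ : K) + (c : K) = (u : K) * ((θ : K) + (c' : K)) := by
      rw [← hkf c, ← hkf c', ← hmulu, Units.val_mul]
    have hu1 : (u : K) = 1 :=
      key_frob hqpn (hne_pow d hd0 hdh) (hpow_fix u hug)
        ((memF _).mp c.2) ((memF _).mp c'.2) heqK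
    have : (θ : K) + (c : K) = (θ : K) + (c' : K) := by rw [heqK, hu1, one_mul]
    exact Subtype.ext (add_left_cancel this)
  -- the set A
  refine ⟨Set.range aMap, ?_, ?_⟩
  · -- IsBhg
    intro b s hs
    set cOf : ZMod N → F := Function.invFun aMap with hcOf
    have hcOfA : ∀ x : ZMod N, x ∈ Set.range aMap → aMap (cOf x) = x := by
      intro x hx
      exact Function.invFun_eq hx
    set L : ZMod N → ℕ := fun x => kf (cOf x) with hL
    have hLval : ∀ x : ZMod N, x ∈ Set.range aMap → ((L x : ℕ) : ZMod N) = x := by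
      intro x hx
      exact hcOfA x hx
    set T : Multiset (ZMod N) → ℕ := fun m => (m.map L).sum with hT
    have hTmod : ∀ m ∈ s, ((T m : ℕ) : ZMod N) = b := by
      intro m hm
      obtain ⟨hcard, hmem, hsum⟩ := hs m hm
      rw [← hsum]
      have h1 : ((T m : ℕ) : ZMod N) = ((m.map L).map (fun k : ℕ => (k : ZMod N))).sum :=
        map_multiset_sum (Nat.castRingHom (ZMod N)) _
      rw [h1, Multiset.map_map]
      congr 1
      calc m.map ((fun k : ℕ => (k : ZMod N)) ∘ L) = m.map id :=
            Multiset.map_congr rfl (fun x hx => hLval x (hmem x hx))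
        _ = m := Multiset.map_id m
    set Ψ : Multiset (ZMod N) → Kˣ := fun m => θ ^ ((T m : ℤ) - (b.val : ℤ)) with hΨ
    have hΨg : ∀ m ∈ s, (Ψ m) ^ g = 1 := by
      intro m hm
      rw [hΨ, ← zpow_natCast, ← zpow_mul]
      apply hordZ
      apply mul_dvd_mul_right
      rw [← ZMod.intCast_zmod_eq_zero_iff_dvd]
      push_cast
      rw [sub_eq_zero, ZMod.natCast_val, ZMod.cast_id]
      exact_mod_cast hTmod m hm
    have hprod : ∀ m : Multiset (ZMod N),
        ((θ : K)) ^ (T m) = (m.map (fun x => (θ : K) + ((cOf x : F) : K))).prod := by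
      intro m
      induction m using Multiset.induction_on with
      | empty => simp [hT]
      | cons a m ih =>
        rw [hT]
        simp only [Multiset.map_cons, Multiset.sum_cons, Multiset.prod_cons]
        rw [pow_add, ih, ← hkf (cOf a)]
        push_cast
        ring
    have hΨinj : Set.InjOn (fun m => ((Ψ m : Kˣ) : K)) s := by
      intro m hm m' hm' hval
      obtain ⟨hc1, hmem1, hsum1⟩ := hs m hm
      obtain ⟨hc2, hmem2, hsum2⟩ := hs m' hm'
      have huu : Ψ m = Ψ m' := Units.ext hval
      have hzp : θ ^ ((T m : ℤ)) = θ ^ ((T m' : ℤ)) := by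
        have h1 : θ ^ ((T m : ℤ)) = Ψ m * θ ^ ((b.val : ℤ)) := by
          rw [hΨ, ← zpow_add, sub_add_cancel]
        have h2 : θ ^ ((T m' : ℤ)) = Ψ m' * θ ^ ((b.val : ℤ)) := by
          rw [hΨ, ← zpow_add, sub_add_cancel]
        rw [h1, h2, huu]
      have hpowT : ((θ : K)) ^ (T m) = ((θ : K)) ^ (T m') := by
        have := congrArg Units.val hzp
        rw [zpow_natCast, zpow_natCast] at this
        exact_mod_cast this
      have hK : (m.map (fun x => (θ : K) + ((cOf x : F) : K))).prod
          = (m'.map (fun x => (θ : K) + ((cOf x : F) : K))).prod := by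
        rw [← hprod m, ← hprod m', hpowT]
      -- polynomials over F
      set M : Multiset F := m.map (fun x => -(cOf x)) with hM
      set M' : Multiset F := m'.map (fun x => -(cOf x)) with hM'
      have haev : ∀ (mm : Multiset (ZMod N)),
          Polynomial.aeval ((θ : K))
            (((mm.map (fun x => -(cOf x))).map (fun a : F => X - C a)).prod)
          = (mm.map (fun x => (θ : K) + ((cOf x : F) : K))).prod := by
        intro mm
        rw [map_multiset_prod, Multiset.map_map, Multiset.map_map]
        congr 1
        apply Multiset.map_congr rfl
        intro x hx
        simp only [Function.comp_apply, map_sub, aeval_X, aeval_C, map_neg,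
          sub_neg_eq_add]
        rw [map_add, aeval_X, aeval_C]
        rfl
      have hMono : ∀ (MM : Multiset F), ((MM.map (fun a : F => X - C a)).prod).Monic :=
        fun MM => monic_multiset_prod_of_monic _ _ (fun a _ => monic_X_sub_C a)
      have hDeg : ∀ (mm : Multiset (ZMod N)), Multiset.card mm = h →
          (((mm.map (fun x => -(cOf x))).map (fun a : F => X - C a)).prod).natDegree = h := by
        intro mm hmm
        rw [natDegree_multiset_prod_X_sub_C_eq_card, Multiset.card_map, hmm]
      have hPQ : ((M.map (fun a : F => X - C a)).prod) = ((M'.map (fun a : F => X - C a)).prod) :=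
        hpoly _ _ (hMono M) (hMono M') (hDeg m hc1) (hDeg m' hc2)
          (by rw [hM, hM', haev m, haev m', hK])
      have hMM : M = M' := by
        rw [← roots_multiset_prod_X_sub_C M, ← roots_multiset_prod_X_sub_C M', hPQ]
      -- recover the multisets
      have hrec : ∀ mm : Multiset (ZMod N), (∀ x ∈ mm, x ∈ Set.range aMap) →
          (mm.map (fun x => -(cOf x))).map (fun a : F => aMap (-a)) = mm := by
        intro mm hmm
        rw [Multiset.map_map]
        calc mm.map ((fun a : F => aMap (-a)) ∘ fun x => -(cOf x))
            = mm.map id := by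
              apply Multiset.map_congr rfl
              intro x hx
              simp only [Function.comp_apply, neg_neg, id]
              exact hcOfA x (hmm x hx)
          _ = mm := Multiset.map_id mm
      calc m = (m.map (fun x => -(cOf x))).map (fun a : F => aMap (-a)) := (hrec m hmem1).symm
        _ = (m'.map (fun x => -(cOf x))).map (fun a : F => aMap (-a)) := by rw [← hM, ← hM', hMM]
        _ = m' := hrec m' hmem2
    -- conclude the cardinality bound
    have hmemT : ∀ m ∈ s, ((Ψ m : Kˣ) : K) ∈ (Polynomial.nthRoots g (1 : K)).toFinset := by
      intro m hm
      rw [Multiset.mem_toFinset, Polynomial.mem_nthRoots (by omega : 0 < g)]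
      have := congrArg Units.val (hΨg m hm)
      rw [Units.val_pow_eq_pow_val] at this
      simpa using this
    calc s.card ≤ (Polynomial.nthRoots g (1 : K)).toFinset.card :=
          Finset.card_le_card_of_injOn _ hmemT hΨinj
      _ ≤ Multiset.card (Polynomial.nthRoots g (1 : K)) := Multiset.toFinset_card_le _
      _ ≤ g := Polynomial.card_nthRoots g 1
  · -- cardinality
    rw [← Set.image_univ, Set.ncard_image_of_injective _ hamap_inj, Set.ncard_univ,
      Nat.card_eq_fintype_card, hcardF]

theorem stmt_18 (g q h : ℕ) (hg : 1 ≤ g) (hq : IsPrimePow q) (hh : 2 ≤ h)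
    (hd : ∃ d : ℕ, 0 < d ∧ d ∣ h ∧ d ≠ h ∧ q ^ d ≡ 1 [MOD g]) :
    q ≤ fBhg ((q ^ h - 1) / g) h g := by
  obtain ⟨d, hd0, hdvd, hdne, hmod⟩ := hd
  obtain ⟨p, n, hp, hn, hpq⟩ := hq
  haveI : Fact p.Prime := ⟨hp.nat_prime⟩
  obtain ⟨A, hA, hAcard⟩ := main_exists p n q h g d hpq.symm hn hh hg hd0 hdvd hdne hmod
  have hq2 : 2 ≤ q := by
    rw [← hpq]
    exact le_trans hp.nat_prime.two_le (Nat.le_self_pow hn.ne' p)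
  have hdh : d < h := lt_of_le_of_ne (Nat.le_of_dvd (by omega) hdvd) hdne
  have hqd2 : 2 ≤ q ^ d := le_trans hq2 (Nat.le_self_pow hd0.ne' q)
  have hgd : g ∣ q ^ d - 1 := (Nat.modEq_iff_dvd' (by omega)).mp hmod.symm
  have hdh' : q ^ d - 1 ∣ q ^ h - 1 := by
    obtain ⟨k, hk⟩ := hdvd
    rw [hk, pow_mul]
    simpa using Nat.sub_dvd_pow_sub_pow (q ^ d) 1 k
  have hgh : g ∣ q ^ h - 1 := hgd.trans hdh'
  have hq2h : 2 ≤ q ^ h := le_trans hq2 (Nat.le_self_pow (by omega) q)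
  have hN : ((q ^ h - 1) / g) * g = q ^ h - 1 := Nat.div_mul_cancel hgh
  have hNpos : 0 < (q ^ h - 1) / g := by
    rcases Nat.eq_zero_or_pos ((q ^ h - 1) / g) with h0 | h0
    · rw [h0, zero_mul] at hN; omega
    · exact h0
  haveI : NeZero ((q ^ h - 1) / g) := ⟨hNpos.ne'⟩
  apply le_csSup
  · refine ⟨Nat.card (ZMod ((q ^ h - 1) / g)), ?_⟩
    rintro x ⟨B, hB, rfl⟩
    calc B.ncard ≤ (Set.univ : Set (ZMod ((q ^ h - 1) / g))).ncard :=
          Set.ncard_le_ncard (Set.subset_univ B) Set.finite_univ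
      _ = Nat.card (ZMod ((q ^ h - 1) / g)) := Set.ncard_univ _
  · exact ⟨A, hA, hAcard⟩
end
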